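/- arXiv:math/9905157 — 7 statements merged into one kernel-verified Lean document; each statement's English description precedes it below -/
import Mathlib

section
/- Fix an integer p ≥ 3, let λ = 2cos(π/p), and let U(x) = λ − 1/x (the linear fractional transformation of the matrix U = [[λ,−1],[1,0]]). Then for every k with 2 ≤ k ≤ p one has U^k(0) = sin(kπ/p)/sin((k−1)π/p); in particular U^p(0) = 0 and U^2(0) = λ, and these values are strictly ordered: 0 = U^p(0) < U^{p−1}(0) < ⋯ < U^3(0) < U^2(0) = λ. -/
open Real Matrix Filter

noncomputable section

/-- `λ_p = 2 cos (π / p)`, the minimal translation length of the Hecke group `G_p`. -/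
def heckeLambda (p : ℕ) : ℝ := 2 * Real.cos (Real.pi / p)

/-- The matrix `S = [[1, λ], [0, 1]]`. -/
def Smat (l : ℝ) : Matrix (Fin 2) (Fin 2) ℝ := !![1, l; 0, 1]

/-- The matrix `T = [[0, -1], [1, 0]]`. -/
def Tmat : Matrix (Fin 2) (Fin 2) ℝ := !![0, -1; 1, 0]

/-- The matrix `U = S * T = [[λ, -1], [1, 0]]`. -/
def Umat (l : ℝ) : Matrix (Fin 2) (Fin 2) ℝ := !![l, -1; 1, 0]

/-- The matrix `S^r = [[1, rλ], [0, 1]]` for an integer exponent `r`. -/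
def SmatZ (l : ℝ) (r : ℤ) : Matrix (Fin 2) (Fin 2) ℝ := !![1, (r : ℝ) * l; 0, 1]

/-- Möbius (linear fractional) action of a `2 × 2` real matrix on a real number. -/
def mobius (M : Matrix (Fin 2) (Fin 2) ℝ) (x : ℝ) : ℝ :=
  (M 0 0 * x + M 0 1) / (M 1 0 * x + M 1 1)

/-- `U^k(0)`, the image of `0` under `k` iterations of the linear fractional
transformation `U : x ↦ λ - 1/x`; as a ratio of entries of the matrix power `U^k`. -/
def Uorbit (l : ℝ) (k : ℕ) : ℝ := ((Umat l) ^ k) 0 1 / ((Umat l) ^ k) 1 1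

/-- The complete quotients `α_j` of the (negative) `λ`-continued fraction algorithm:
`α_0 = α`, `α_{j+1} = 1 / (r_j λ - α_j)` with `r_j = ⌊α_j / λ⌋ + 1`. -/
def cq (l α : ℝ) : ℕ → ℝ
  | 0 => α
  | j + 1 => 1 / (((⌊cq l α j / l⌋ : ℝ) + 1) * l - cq l α j)

/-- The partial quotients `r_j = ⌊α_j / λ⌋ + 1` of the `λ`-continued fraction of `α`. -/
def pq (l α : ℝ) (j : ℕ) : ℤ := ⌊cq l α j / l⌋ + 1

/-- `S` as an element of `SL(2, ℝ)`. -/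
def Sgen (l : ℝ) : Matrix.SpecialLinearGroup (Fin 2) ℝ :=
  ⟨!![1, l; 0, 1], by norm_num [Matrix.det_fin_two_of]⟩

/-- `T` as an element of `SL(2, ℝ)`. -/
def Tgen : Matrix.SpecialLinearGroup (Fin 2) ℝ :=
  ⟨!![0, -1; 1, 0], by norm_num [Matrix.det_fin_two_of]⟩

/-- The Hecke group `G_p`, the subgroup of `SL(2, ℝ)` generated by `S` and `T`. -/
def heckeGroup (l : ℝ) : Subgroup (Matrix.SpecialLinearGroup (Fin 2) ℝ) :=
  Subgroup.closure {Sgen l, Tgen}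

/-- `M = [[a, b], [c, d]]` fixes `α` as a linear fractional transformation, i.e.
`α` is a root of `c x² + (d - a) x - b = 0`. -/
def fixesQuad (M : Matrix.SpecialLinearGroup (Fin 2) ℝ) (α : ℝ) : Prop :=
  M.1 1 0 * α ^ 2 + (M.1 1 1 - M.1 0 0) * α - M.1 0 1 = 0

/-- `α` is a hyperbolic fixed point of the Hecke group `G(λ)`. -/
def IsHypFixedPt (l α : ℝ) : Prop :=
  ∃ M ∈ heckeGroup l, 2 < |M.1 0 0 + M.1 1 1| ∧ fixesQuad M α

/-- `α` is a hyperbolic fixed point of `G(λ)` with Hecke conjugate `α'`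
(the other root of the fixed-point quadratic). -/
def IsHypPair (l α α' : ℝ) : Prop :=
  ∃ M ∈ heckeGroup l, 2 < |M.1 0 0 + M.1 1 1| ∧ fixesQuad M α ∧ fixesQuad M α' ∧ α' ≠ α

/-- A hyperbolic fixed point is `G_p`-reduced when its complete-quotient sequence is
purely periodic. -/
def GpReduced (l β : ℝ) : Prop :=
  IsHypFixedPt l β ∧ ∃ m, 1 ≤ m ∧ cq l β m = β

/-- The map `Φ_p : [0, ∞) → [0, ∞)`: `Φ_p(x) = T U^i (x)` when
`U^{p-i+1}(0) ≤ x < U^{p-i}(0)` for the (unique) `i` with `1 ≤ i ≤ p - 2`,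
and `Φ_p(x) = x - λ` when `x ≥ λ`. -/
def Phi (p : ℕ) (l : ℝ) (x : ℝ) : ℝ :=
  @dite ℝ (∃ i : ℕ, 1 ≤ i ∧ i ≤ p - 2 ∧ Uorbit l (p - i + 1) ≤ x ∧ x < Uorbit l (p - i))
    (Classical.propDecidable _)
    (fun h => mobius (Tmat * (Umat l) ^ h.choose) x)
    (fun _ => x - l)

/-- `C_{n-j, n}`: the partial convergents computed by downward recursion,
`C_{n,n} = r_n λ` and `C_{m,n} = r_m λ - 1 / C_{m+1,n}`. -/
def convAux (l α : ℝ) (n : ℕ) : ℕ → ℝ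
  | 0 => (pq l α n : ℝ) * l
  | j + 1 => (pq l α (n - (j + 1)) : ℝ) * l - 1 / convAux l α n j

/-- The `n`-th convergent `C_n = C_{0,n}` of the `λ`-continued fraction of `α`. -/
def conv (l α : ℝ) (n : ℕ) : ℝ := convAux l α n n

/-- The word `S^{r_0} T S^{r_1} T ⋯ S^{r_n} T`. -/
def cfWord (l : ℝ) (r : ℕ → ℤ) (n : ℕ) : Matrix (Fin 2) (Fin 2) ℝ :=
  ((List.range (n + 1)).map fun j => SmatZ l (r j) * Tmat).prod

/-! With `λ = 2 cos t`, the recurrence `sin (x + t) = λ sin x - sin (x - t)` makes the entries of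
`sin t • U^k` the Chebyshev-type values `±sin (j t)`, so `U^k(0) = sin (k t) / sin ((k - 1) t)`.
For `t = π / p` these ratios decrease because `sin ((k + 1) t) sin ((k - 1) t) = sin² (k t) - sin² t`. -/

theorem sin_add_add_sin_sub (x t : ℝ) : sin (x + t) + sin (x - t) = 2 * cos t * sin x := by
  rw [sin_add, sin_sub]; ring

theorem sin_add_mul_sin_sub (x t : ℝ) : sin (x + t) * sin (x - t) = sin x ^ 2 - sin t ^ 2 := by
  rw [sin_add, sin_sub]
  linear_combination sin x ^ 2 * sin_sq_add_cos_sq t - sin t ^ 2 * sin_sq_add_cos_sq x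

theorem smul_Umat_two_cos_pow (t : ℝ) (k : ℕ) :
    sin t • Umat (2 * cos t) ^ k =
      !![sin ((k + 1) * t), -sin (k * t); sin (k * t), -sin ((k - 1) * t)] := by
  induction k with
  | zero =>
    ext i j
    fin_cases i <;> fin_cases j <;> simp
  | succ k ih =>
    rw [pow_succ, ← smul_mul_assoc, ih]
    have h₁ : sin ((k + 1 + 1) * t) + sin (k * t) = 2 * cos t * sin ((k + 1) * t) := by
      convert sin_add_add_sin_sub ((k + 1) * t) t using 3 <;> ring
    have h₂ : sin ((k + 1) * t) + sin ((k - 1) * t) = 2 * cos t * sin (k * t) := by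
      convert sin_add_add_sin_sub (k * t) t using 3 <;> ring
    ext i j
    fin_cases i <;> fin_cases j <;>
      simp only [Umat, Fin.zero_eta, Fin.mk_one, Fin.isValue, Matrix.mul_apply, of_apply, cons_val',
        cons_val_fin_one, cons_val_zero, cons_val_one, Fin.sum_univ_two, mul_neg, mul_one, mul_zero,
        add_zero, Nat.cast_add, Nat.cast_one, add_sub_cancel_right]
    · linear_combination -h₁
    · linear_combination -h₂

theorem Uorbit_two_cos {t : ℝ} (ht : sin t ≠ 0) (k : ℕ) :
    Uorbit (2 * cos t) k = sin (k * t) / sin ((k - 1) * t) := by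
  have h := smul_Umat_two_cos_pow t k
  have h₀₁ := congrFun₂ h 0 1
  have h₁₁ := congrFun₂ h 1 1
  simp only [Matrix.smul_apply, smul_eq_mul, Matrix.of_apply] at h₀₁ h₁₁
  rw [Uorbit, ← mul_div_mul_left _ _ ht, h₀₁, h₁₁]
  exact neg_div_neg_eq _ _

theorem Uorbit_two_cos_succ_lt {t : ℝ} (ht : sin t ≠ 0) {k : ℕ}
    (hk : 0 < sin (k * t)) (hk' : 0 < sin ((k - 1) * t)) :
    Uorbit (2 * cos t) (k + 1) < Uorbit (2 * cos t) k := by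
  rw [Uorbit_two_cos ht, Uorbit_two_cos ht, Nat.cast_add_one, add_sub_cancel_right,
    div_lt_div_iff₀ hk hk', add_mul, one_mul, sub_mul, one_mul, sin_add_mul_sin_sub]
  have : 0 < sin t ^ 2 := by positivity
  linarith

theorem sin_mul_pi_div_pos {p x : ℝ} (hx : 0 < x) (hxp : x < p) : 0 < sin (x * (π / p)) := by
  have hp : 0 < p := hx.trans hxp
  apply sin_pos_of_pos_of_lt_pi (by positivity)
  rw [← mul_div_assoc, div_lt_iff₀ hp]
  nlinarith [pi_pos]

/-- For `p ≥ 3`, `λ = 2cos(π/p)` and `U : x ↦ λ - 1/x`, one has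
`U^k(0) = sin(kπ/p)/sin((k-1)π/p)` for `2 ≤ k ≤ p`; in particular `U^p(0) = 0`,
`U^2(0) = λ`, and `0 = U^p(0) < U^{p-1}(0) < ⋯ < U^2(0) = λ`. -/
theorem hecke_Uorbit_values (p : ℕ) (hp : 3 ≤ p) :
    (∀ k : ℕ, 2 ≤ k → k ≤ p →
      Uorbit (heckeLambda p) k
        = Real.sin (k * Real.pi / p) / Real.sin (((k : ℝ) - 1) * Real.pi / p)) ∧
    Uorbit (heckeLambda p) p = 0 ∧
    Uorbit (heckeLambda p) 2 = heckeLambda p ∧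
    (∀ k : ℕ, 2 ≤ k → k < p →
      Uorbit (heckeLambda p) (k + 1) < Uorbit (heckeLambda p) k) := by
  have hl : heckeLambda p = 2 * cos (π / p) := rfl
  have hpR : (3 : ℝ) ≤ p := by exact_mod_cast hp
  have hs : sin (π / p) ≠ 0 := by
    simpa using (sin_mul_pi_div_pos (x := 1) one_pos (by linarith)).ne'
  have hp0 : (p : ℝ) ≠ 0 := by positivity
  refine ⟨fun k _ _ => ?_, ?_, ?_, fun k hk hkp => ?_⟩
  · rw [hl, Uorbit_two_cos hs, mul_div_assoc, mul_div_assoc]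
  · rw [hl, Uorbit_two_cos hs, mul_div_cancel₀ π hp0, sin_pi, zero_div]
  · rw [hl, Uorbit_two_cos hs, Nat.cast_ofNat, show (2 : ℝ) - 1 = 1 by norm_num, one_mul, sin_two_mul, mul_right_comm,
      mul_div_cancel_right₀ _ hs]
  · have hkR : (2 : ℝ) ≤ k := by exact_mod_cast hk
    have hkpR : (k : ℝ) < p := by exact_mod_cast hkp
    rw [hl]
    exact Uorbit_two_cos_succ_lt hs (sin_mul_pi_div_pos (by linarith) hkpR)
      (sin_mul_pi_div_pos (by linarith) (by linarith))
end
end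

section
/- Fix an integer p ≥ 3, let λ = 2cos(π/p), and let U(x) = λ − 1/x. Then for every integer k with 2 ≤ k ≤ p−1 one has U^k(0) · U^{p−k+1}(0) = 1, i.e. 1/(U^k(0)) = U^{p−k+1}(0). -/
/-!
The powers of `U = [[λ, -1], [1, 0]]` are given by the rescaled Chebyshev polynomials of the
second kind, `U^n = [[Sₙ(λ), -Sₙ₋₁(λ)], [Sₙ₋₁(λ), -Sₙ₋₂(λ)]]`. At `λ = 2 cos θ` one has
`Sₙ₋₁(λ) sin θ = sin (n θ)`, so `U^n(0) = sin (n θ) / sin ((n - 1) θ)`. For `θ = π / p` the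
reflection `sin ((p - m) θ) = sin (m θ)` exchanges numerator and denominator under `n ↦ p - n + 1`.
-/

open Real Matrix Filter

noncomputable section

open Polynomial.Chebyshev

theorem Umat_pow (l : ℝ) (n : ℕ) :
    Umat l ^ n = !![(S ℝ n).eval l, -(S ℝ (n - 1)).eval l;
                    (S ℝ (n - 1)).eval l, -(S ℝ (n - 2)).eval l] := by
  induction n with
  | zero => ext i j; fin_cases i <;> fin_cases j <;> simp
  | succ n ih =>
    have h₁ : (S ℝ (n + 1)).eval l = l * (S ℝ n).eval l - (S ℝ (n - 1)).eval l := by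
      simp [S_add_one]
    have h₂ : (S ℝ n).eval l = l * (S ℝ (n - 1)).eval l - (S ℝ (n - 2)).eval l := by
      rw [S_eq]; simp
    rw [pow_succ, ih, Umat, mul_fin_two]
    ext i j
    fin_cases i <;> fin_cases j <;> simp [show (n : ℤ) + 1 - 2 = n - 1 by ring] <;> linarith

theorem Uorbit_eq_div (l : ℝ) (n : ℕ) :
    Uorbit l n = (S ℝ (n - 1)).eval l / (S ℝ (n - 2)).eval l := by
  simp [Uorbit, Umat_pow, neg_div_neg_eq]

theorem Uorbit_two_mul_cos {θ : ℝ} (hθ : sin θ ≠ 0) (n : ℕ) :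
    Uorbit (2 * cos θ) n = sin (n * θ) / sin ((n - 1) * θ) := by
  rw [Uorbit_eq_div, ← mul_div_mul_right _ _ hθ, S_two_mul_real_cos, S_two_mul_real_cos]
  push_cast
  ring_nf

theorem sin_nat_mul_pi_div_pos {m p : ℕ} (hm : 0 < m) (hmp : m < p) :
    0 < sin (m * (π / p)) := by
  have hp : (0 : ℝ) < p := by exact_mod_cast hm.trans hmp
  apply sin_pos_of_pos_of_lt_pi (by positivity)
  rw [mul_div_assoc', div_lt_iff₀ hp, mul_comm]
  gcongr

theorem sin_sub_mul_pi_div {p : ℕ} (hp : p ≠ 0) (x : ℝ) :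
    sin ((p - x) * (π / p)) = sin (x * (π / p)) := by
  rw [sub_mul, mul_div_cancel₀ _ (by exact_mod_cast hp), sin_pi_sub]

theorem hecke_Uorbit_reciprocal_general (p : ℕ) :
    ∀ k : ℕ, 2 ≤ k → k ≤ p - 1 →
      Uorbit (heckeLambda p) k * Uorbit (heckeLambda p) (p - k + 1) = 1 ∧
      1 / Uorbit (heckeLambda p) k = Uorbit (heckeLambda p) (p - k + 1) := by
  intro k hk hkp
  set θ := π / p
  have hθ : sin θ ≠ 0 := by
    simpa using (sin_nat_mul_pi_div_pos (m := 1) (p := p) one_pos (by omega)).ne'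
  have hk₀ : sin (k * θ) ≠ 0 := (sin_nat_mul_pi_div_pos (by omega) (by omega)).ne'
  have hk₁ : sin ((k - 1) * θ) ≠ 0 := by
    simpa [Nat.cast_sub (by omega : 1 ≤ k)] using
      (sin_nat_mul_pi_div_pos (m := k - 1) (p := p) (by omega) (by omega)).ne'
  have hreflect : Uorbit (heckeLambda p) (p - k + 1) = sin ((k - 1) * θ) / sin (k * θ) := by
    rw [heckeLambda, Uorbit_two_mul_cos hθ, Nat.cast_add, Nat.cast_sub (by omega), Nat.cast_one,
      show (p : ℝ) - k + 1 = p - (k - 1) by ring, show (p : ℝ) - (k - 1) - 1 = p - k by ring,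
      sin_sub_mul_pi_div (by omega), sin_sub_mul_pi_div (by omega)]
  have hprod : Uorbit (heckeLambda p) k * Uorbit (heckeLambda p) (p - k + 1) = 1 := by
    rw [hreflect, heckeLambda, Uorbit_two_mul_cos hθ, div_mul_div_cancel₀ hk₁, div_self hk₀]
  exact ⟨hprod, (eq_one_div_of_mul_eq_one_right hprod).symm⟩

/-- for `2 ≤ k ≤ p - 1`, `U^k(0) · U^{p-k+1}(0) = 1`,
i.e. `1 / U^k(0) = U^{p-k+1}(0)`. -/
theorem hecke_Uorbit_reciprocal (p : ℕ) (hp : 3 ≤ p) :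
    ∀ k : ℕ, 2 ≤ k → k ≤ p - 1 →
      Uorbit (heckeLambda p) k * Uorbit (heckeLambda p) (p - k + 1) = 1 ∧
      1 / Uorbit (heckeLambda p) k = Uorbit (heckeLambda p) (p - k + 1) :=
  hecke_Uorbit_reciprocal_general p
end
end

section
/- Fix an integer p ≥ 3, let λ = 2cos(π/p), T = [[0,−1],[1,0]] and U = [[λ,−1],[1,0]], acting on ℝ ∪ {∞} as linear fractional transformations. Let α ∈ ℝ and 1 ≤ i ≤ p−1. Then: for 1 ≤ i ≤ p−2, one has U^{p−i+1}(0) ≤ α < U^{p−i}(0) if and only if TU^i(α) lies in [0,∞); for i = p−1, one has α ≥ U^2(0) = λ if and only if TU^{p−1}(α) lies in [0,∞). Moreover α = U^{p−i+1}(0) if and only if TU^i(α) = 0. (In each case the denominator of TU^i(α) = (−c_i α + c_{i−1})/(c_{i+1} α − c_i), with c_k = sin(kπ/p)/sin(π/p), is nonzero for α in the stated range.) -/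
open Real Matrix Filter

noncomputable section

/-! The entries of `U^k` are `c_k = sin(kπ/p)/sin(π/p)`, the solution of `c_{k+2} = λ c_{k+1} - c_k`
with `c_0 = 0`, `c_1 = 1`; hence `TU^i = [[-c_i, c_{i-1}], [c_{i+1}, -c_i]]`, whose determinant
gives `c_i² - c_{i-1} c_{i+1} = 1`. The sine formula gives `c_k > 0` for `0 < k < p` and
`c_{p-k} = c_k`, so `U^{p-i+1}(0) = c_{i-1}/c_i` and `U^{p-i}(0) = c_i/c_{i+1}`. With all three
entries positive, the sign of `TU^i(α) = (c_{i-1} - c_i α)/(c_{i+1} α - c_i)` is read off from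
the position of `α` relative to these two roots of numerator and denominator. -/

theorem mobius_of (a b c d x : ℝ) : mobius !![a, b; c, d] x = (a * x + b) / (c * x + d) := rfl

theorem det_Umat (l : ℝ) : (Umat l).det = 1 := by
  simp [Umat, det_fin_two_of]

section Recurrence

variable {l : ℝ} {c : ℕ → ℝ}

theorem Umat_pow_succ_of_rec (h0 : c 0 = 0) (h1 : c 1 = 1)
    (hrec : ∀ k, c (k + 2) = l * c (k + 1) - c k) (k : ℕ) :
    Umat l ^ (k + 1) = !![c (k + 2), -c (k + 1); c (k + 1), -c k] := by
  induction k with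
  | zero => simp [Umat, hrec 0, h0, h1]
  | succ k ih =>
    rw [pow_succ, ih, Umat, mul_fin_two, show k + 1 + 2 = k + 3 from rfl, hrec (k + 1), hrec k]
    ext i j
    fin_cases i <;> fin_cases j <;> simp <;> ring

theorem sq_sub_mul_eq_one_of_rec (h0 : c 0 = 0) (h1 : c 1 = 1)
    (hrec : ∀ k, c (k + 2) = l * c (k + 1) - c k) (k : ℕ) :
    c (k + 1) ^ 2 - c k * c (k + 2) = 1 := by
  have h := congrArg det (Umat_pow_succ_of_rec h0 h1 hrec k)
  rw [det_pow, det_Umat, one_pow, det_fin_two_of] at h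
  linear_combination -h

theorem Tmat_mul_Umat_pow_succ_of_rec (h0 : c 0 = 0) (h1 : c 1 = 1)
    (hrec : ∀ k, c (k + 2) = l * c (k + 1) - c k) (k : ℕ) :
    Tmat * Umat l ^ (k + 1) = !![-c (k + 1), c k; c (k + 2), -c (k + 1)] := by
  rw [Umat_pow_succ_of_rec h0 h1 hrec, Tmat, mul_fin_two]
  simp

theorem Uorbit_succ_of_rec (h0 : c 0 = 0) (h1 : c 1 = 1)
    (hrec : ∀ k, c (k + 2) = l * c (k + 1) - c k) (k : ℕ) :
    Uorbit l (k + 1) = c (k + 1) / c k := by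
  simp [Uorbit, Umat_pow_succ_of_rec h0 h1 hrec, neg_div_neg_eq]

end Recurrence

/-- The paper's `c_k`; it equals `U_{k-1}(λ/2)` for the Chebyshev polynomials `U`. -/
def heckeSeq (p k : ℕ) : ℝ := sin (k * (π / p)) / sin (π / p)

section HeckeSeq

variable {p : ℕ}

theorem heckeSeq_zero : heckeSeq p 0 = 0 := by
  simp [heckeSeq]

theorem heckeSeq_one (hp : 1 < p) : heckeSeq p 1 = 1 := by
  have : 0 < sin (π / p) := by
    apply sin_pos_of_pos_of_lt_pi (by positivity)
    exact div_lt_self pi_pos (by exact_mod_cast hp)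
  simp [heckeSeq, this.ne']

theorem heckeSeq_add_two (k : ℕ) :
    heckeSeq p (k + 2) = heckeLambda p * heckeSeq p (k + 1) - heckeSeq p k := by
  have h2 : ((k + 2 : ℕ) : ℝ) * (π / p) = (k + 1 : ℕ) * (π / p) + π / p := by push_cast; ring
  have h0 : (k : ℝ) * (π / p) = (k + 1 : ℕ) * (π / p) - π / p := by push_cast; ring
  rw [heckeSeq, heckeSeq, heckeSeq, heckeLambda, h2, h0, sin_add, sin_sub]
  ring

theorem heckeSeq_self : heckeSeq p p = 0 := by
  rcases p.eq_zero_or_pos with rfl | hp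
  · simp [heckeSeq]
  · rw [heckeSeq, mul_div_cancel₀ _ (by positivity : (p : ℝ) ≠ 0), sin_pi, zero_div]

theorem heckeSeq_pos {k : ℕ} (hk : 0 < k) (hkp : k < p) : 0 < heckeSeq p k := by
  have hp : (0 : ℝ) < p := by exact_mod_cast hk.trans hkp
  have hkp' : (k : ℝ) < p := by exact_mod_cast hkp
  have hsin : ∀ x : ℝ, 0 < x → x < p → 0 < sin (x * (π / p)) := fun x hx hxp =>
    sin_pos_of_pos_of_lt_pi (by positivity) <| by
      calc x * (π / p) < p * (π / p) := by gcongr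
        _ = π := by field_simp
  have h1p : (1 : ℝ) < p := by exact_mod_cast Nat.lt_of_le_of_lt hk hkp
  rw [heckeSeq]
  exact div_pos (hsin k (by exact_mod_cast hk) hkp') (by simpa using hsin 1 one_pos h1p)

theorem heckeSeq_sub {k : ℕ} (hk : k ≤ p) : heckeSeq p (p - k) = heckeSeq p k := by
  rcases p.eq_zero_or_pos with rfl | hp
  · obtain rfl : k = 0 := by omega
    rfl
  · rw [heckeSeq, heckeSeq, Nat.cast_sub hk, sub_mul, mul_div_cancel₀ _ (by positivity : (p : ℝ) ≠ 0),
      sin_pi_sub]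

end HeckeSeq

theorem Uorbit_heckeLambda_sub {p k : ℕ} (hk : k + 1 < p) :
    Uorbit (heckeLambda p) (p - k) = heckeSeq p k / heckeSeq p (k + 1) := by
  obtain ⟨m, hm⟩ : ∃ m, p - k = m + 1 := ⟨p - (k + 1), by omega⟩
  rw [hm, Uorbit_succ_of_rec heckeSeq_zero (heckeSeq_one (by omega)) heckeSeq_add_two, ← hm,
    show m = p - (k + 1) by omega, heckeSeq_sub (by omega), heckeSeq_sub (by omega)]

theorem Tmat_mul_Umat_heckeLambda_pow_pred {p : ℕ} (hp : 1 < p) :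
    Tmat * Umat (heckeLambda p) ^ (p - 1) = !![-1, heckeLambda p; 0, -1] := by
  have hc1 : heckeSeq p 1 = 1 := heckeSeq_one hp
  obtain ⟨m, hm⟩ : ∃ m, p - 1 = m + 1 := ⟨p - 2, by omega⟩
  rw [hm, Tmat_mul_Umat_pow_succ_of_rec heckeSeq_zero hc1 heckeSeq_add_two, ← hm,
    show m = p - 2 by omega, show p - 2 + 2 = p by omega, heckeSeq_self, heckeSeq_sub hp.le,
    heckeSeq_sub (by omega), hc1, heckeSeq_add_two 0, heckeSeq_zero, hc1, mul_one, sub_zero]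

section MobiusSign

variable {a b d x : ℝ}

theorem le_and_lt_iff_mobius_nonneg (ha : 0 < a) (hd : 0 < d) (hdet : a ^ 2 - b * d = 1) :
    (b / a ≤ x ∧ x < a / d) ↔
      (!![-a, b; d, -a] 1 0 * x + !![-a, b; d, -a] 1 1 ≠ 0 ∧ 0 ≤ mobius !![-a, b; d, -a] x) := by
  have key : a * (d * x - a) + d * (b - a * x) = -1 := by linear_combination -hdet
  simp only [mobius_of, of_apply, cons_val', cons_val_zero, cons_val_fin_one, cons_val_one,
    neg_mul, neg_add_eq_sub, ← sub_eq_add_neg]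
  rw [div_le_iff₀' ha, lt_div_iff₀' hd]
  constructor
  · rintro ⟨h1, h2⟩
    exact ⟨by linarith, div_nonneg_of_nonpos (by linarith) (by linarith)⟩
  · rintro ⟨hD, hq⟩
    rcases div_nonneg_iff.mp hq with ⟨hN, hD'⟩ | ⟨hN, hD'⟩
    · nlinarith [mul_pos ha (lt_of_le_of_ne hD' (Ne.symm hD)), mul_nonneg hd.le hN]
    · exact ⟨by linarith, by linarith [lt_of_le_of_ne hD' hD]⟩

theorem eq_div_iff_mobius_eq_zero (ha : a ≠ 0) (hdet : a ^ 2 - b * d = 1) :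
    x = b / a ↔
      (!![-a, b; d, -a] 1 0 * x + !![-a, b; d, -a] 1 1 ≠ 0 ∧ mobius !![-a, b; d, -a] x = 0) := by
  have key : a * (d * x - a) + d * (b - a * x) = -1 := by linear_combination -hdet
  simp only [mobius_of, of_apply, cons_val', cons_val_zero, cons_val_fin_one, cons_val_one,
    neg_mul, neg_add_eq_sub, ← sub_eq_add_neg]
  rw [eq_div_iff ha]
  constructor
  · intro h
    have hN : b - a * x = 0 := by linarith
    refine ⟨fun hD => ?_, by rw [hN, zero_div]⟩
    rw [hD, hN] at key
    norm_num at key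
  · rintro ⟨hD, hq⟩
    linarith [(div_eq_zero_iff.mp hq).resolve_right hD]

end MobiusSign

/-- for `1 ≤ i ≤ p-2`, `U^{p-i+1}(0) ≤ α < U^{p-i}(0)` iff `TU^i(α)`
lies in `[0, ∞)` (in particular, its denominator is nonzero); for `i = p-1`,
`α ≥ λ` iff `TU^{p-1}(α)` lies in `[0, ∞)`; and `α = U^{p-i+1}(0)` iff
`TU^i(α) = 0`. -/
theorem hecke_interval_lemma (p : ℕ) (hp : 3 ≤ p) (α : ℝ) :
    (∀ i : ℕ, 1 ≤ i → i ≤ p - 2 →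
      ((Uorbit (heckeLambda p) (p - i + 1) ≤ α ∧ α < Uorbit (heckeLambda p) (p - i)) ↔
        ((Tmat * (Umat (heckeLambda p)) ^ i) 1 0 * α
            + (Tmat * (Umat (heckeLambda p)) ^ i) 1 1 ≠ 0 ∧
          0 ≤ mobius (Tmat * (Umat (heckeLambda p)) ^ i) α))) ∧
    ((heckeLambda p ≤ α) ↔
      ((Tmat * (Umat (heckeLambda p)) ^ (p - 1)) 1 0 * α
          + (Tmat * (Umat (heckeLambda p)) ^ (p - 1)) 1 1 ≠ 0 ∧
        0 ≤ mobius (Tmat * (Umat (heckeLambda p)) ^ (p - 1)) α)) ∧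
    (∀ i : ℕ, 1 ≤ i → i ≤ p - 1 →
      (α = Uorbit (heckeLambda p) (p - i + 1) ↔
        ((Tmat * (Umat (heckeLambda p)) ^ i) 1 0 * α
            + (Tmat * (Umat (heckeLambda p)) ^ i) 1 1 ≠ 0 ∧
          mobius (Tmat * (Umat (heckeLambda p)) ^ i) α = 0))) := by
  have hc1 : heckeSeq p 1 = 1 := heckeSeq_one (by omega)
  have TU := Tmat_mul_Umat_pow_succ_of_rec heckeSeq_zero hc1 heckeSeq_add_two
  have hdet := sq_sub_mul_eq_one_of_rec heckeSeq_zero hc1 heckeSeq_add_two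
  refine ⟨fun i hi1 hi2 => ?_, ?_, fun i hi1 hi2 => ?_⟩
  · obtain ⟨k, rfl⟩ : ∃ k, i = k + 1 := ⟨i - 1, by omega⟩
    rw [show p - (k + 1) + 1 = p - k by omega, Uorbit_heckeLambda_sub (by omega),
      Uorbit_heckeLambda_sub (by omega), TU]
    exact le_and_lt_iff_mobius_nonneg (heckeSeq_pos (by omega) (by omega))
      (heckeSeq_pos (by omega) (by omega)) (hdet k)
  · rw [Tmat_mul_Umat_heckeLambda_pow_pred (by omega)]
    norm_num [mobius_of, neg_add_eq_sub, div_neg]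
  · obtain ⟨k, rfl⟩ : ∃ k, i = k + 1 := ⟨i - 1, by omega⟩
    rw [show p - (k + 1) + 1 = p - k by omega, Uorbit_heckeLambda_sub (by omega), TU]
    exact eq_div_iff_mobius_eq_zero (heckeSeq_pos (by omega) (by omega)).ne' (hdet k)
end
end

section
/- Fix an integer p ≥ 3 and let λ = 2cos(π/p). Let α ∈ ℝ with partial quotients r_j produced by the λ-continued-fraction algorithm. For 0 ≤ m ≤ n define C_{m,n} by downward recursion: C_{n,n} = r_nλ and C_{m,n} = r_mλ − 1/C_{m+1,n}. Then the convergents C_n = C_{0,n} satisfy C_n > α for all n ≥ 0 and C_{n+1} < C_n for all n ≥ 0; consequently the sequence (C_n) converges. -/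
open Real Matrix Filter

noncomputable section

/-!
The complete quotients satisfy `α_m = r_m λ - 1 / α_{m+1}` with `α_{m+1} > 0`, and
`x ↦ r λ - 1 / x` is strictly increasing on `(0, ∞)`. The convergent `C_{m,n}` arises from the
same recursion with the tail `1 / α_{n+1}` replaced by `0`, which gives `α_m < C_{m,n}` by downward
induction; likewise `C_{n,n+1} < r_n λ = C_{n,n}` propagates down to `C_{n+1} < C_n`. A decreasing
sequence bounded below by `α` converges.
-/

lemma heckeLambda_pos {p : ℕ} (hp : 2 < p) : 0 < heckeLambda p := by
  have hp' : (2 : ℝ) < p := by exact_mod_cast hp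
  have hpos : 0 < π / p := div_pos pi_pos (by linarith)
  have hcos : 0 < cos (π / p) :=
    cos_pos_of_mem_Ioo ⟨by linarith [pi_pos], div_lt_div_of_pos_left pi_pos two_pos hp'⟩
  unfold heckeLambda
  positivity

lemma cq_eq_pq_mul_sub_one_div (l α : ℝ) (j : ℕ) :
    cq l α j = pq l α j * l - 1 / cq l α (j + 1) := by
  simp only [cq, pq, one_div_one_div, Int.cast_add, Int.cast_one]
  ring

lemma convAux_succ (l α : ℝ) (m j : ℕ) :
    convAux l α (m + 1 + j) (j + 1) = pq l α m * l - 1 / convAux l α (m + 1 + j) j := by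
  rw [convAux, show m + 1 + j - (j + 1) = m by omega]

section

variable {l : ℝ} (hl : 0 < l) (α : ℝ)
include hl

lemma cq_lt_pq_mul (j : ℕ) : cq l α j < pq l α j * l := by
  have h := (div_lt_iff₀ hl).1 (Int.lt_floor_add_one (cq l α j / l))
  simpa only [pq, Int.cast_add, Int.cast_one] using h

lemma cq_succ_pos (j : ℕ) : 0 < cq l α (j + 1) :=
  one_div_pos.1 (by linarith [cq_eq_pq_mul_sub_one_div l α j, cq_lt_pq_mul hl α j])

lemma cq_lt_convAux (j m : ℕ) : cq l α m < convAux l α (m + j) j := by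
  induction j generalizing m with
  | zero => exact cq_lt_pq_mul hl α m
  | succ j ih =>
    rw [show m + (j + 1) = m + 1 + j by omega, convAux_succ, cq_eq_pq_mul_sub_one_div]
    exact sub_lt_sub_left (one_div_lt_one_div_of_lt (cq_succ_pos hl α m) (ih (m + 1))) _

lemma convAux_pos (j m : ℕ) : 0 < convAux l α (m + 1 + j) j :=
  (cq_succ_pos hl α m).trans (cq_lt_convAux hl α j (m + 1))

lemma convAux_succ_lt (j m : ℕ) : convAux l α (m + j + 1) (j + 1) < convAux l α (m + j) j := by
  induction j generalizing m with
  | zero =>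
    have := convAux_pos hl α 0 m
    rw [add_zero, ← add_zero (m + 1), convAux_succ]
    exact sub_lt_self _ (one_div_pos.2 this)
  | succ j ih =>
    rw [show m + (j + 1) + 1 = m + 1 + (j + 1) by omega, show m + (j + 1) = m + 1 + j by omega,
      convAux_succ, convAux_succ]
    exact sub_lt_sub_left (one_div_lt_one_div_of_lt (convAux_pos hl α (j + 1) m) (ih (m + 1))) _

end

/-- the convergents `C_n` of the `λ`-continued fraction of `α`
satisfy `C_n > α`, are strictly decreasing, and hence converge. -/
theorem hecke_convergents (p : ℕ) (hp : 3 ≤ p) (α : ℝ) :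
    (∀ n : ℕ, α < conv (heckeLambda p) α n) ∧
    (∀ n : ℕ, conv (heckeLambda p) α (n + 1) < conv (heckeLambda p) α n) ∧
    ∃ L : ℝ, Filter.Tendsto (conv (heckeLambda p) α) Filter.atTop (nhds L) := by
  have hl := heckeLambda_pos hp
  have above (n : ℕ) : α < conv (heckeLambda p) α n := by
    simpa [conv, cq] using cq_lt_convAux hl α n 0
  have decreasing (n : ℕ) : conv (heckeLambda p) α (n + 1) < conv (heckeLambda p) α n := by
    simpa [conv] using convAux_succ_lt hl α n 0
  exact ⟨above, decreasing, _, tendsto_atTop_ciInf (strictAnti_nat_of_succ_lt decreasing).antitone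
    ⟨α, Set.forall_mem_range.2 fun n => (above n).le⟩⟩
end
end

section
/- Fix an integer p ≥ 3 and let λ = 2cos(π/p). Let α ∈ ℝ with partial quotients (r_j) produced by the λ-continued-fraction algorithm. Then for every m ≥ 1, the p−2 consecutive partial quotients r_m, r_{m+1}, …, r_{m+p−3} are not all equal to 1; that is, after the initial position the expansion contains at most p−3 consecutive ones. -/
open Real Matrix Filter

noncomputable section

/-- for `m ≥ 1` the `p - 2` consecutive partial quotients
`r_m, …, r_{m+p-3}` are not all equal to `1`. -/
theorem hecke_consecutive_ones_interior (p : ℕ) (hp : 3 ≤ p) (α : ℝ)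
    (m : ℕ) (hm : 1 ≤ m) :
    ¬ ∀ j : ℕ, j ≤ p - 3 → pq (heckeLambda p) α (m + j) = 1 := by
  intro hall
  set l := heckeLambda p with hl
  set θ := Real.pi / p with hθ
  have hp0 : (0:ℝ) < (p:ℝ) := by
    have : (3:ℝ) ≤ (p:ℝ) := by exact_mod_cast hp
    linarith
  have hθpos : 0 < θ := div_pos Real.pi_pos hp0
  have hθle : θ ≤ Real.pi / 3 := by
    rw [hθ]
    apply div_le_div_of_nonneg_left Real.pi_pos.le (by norm_num)
    exact_mod_cast hp
  have hcos : (1:ℝ)/2 ≤ Real.cos θ := by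
    have h1 : Real.cos (Real.pi/3) ≤ Real.cos θ := by
      apply Real.cos_le_cos_of_nonneg_of_le_pi hθpos.le _ hθle
      linarith [Real.pi_pos]
    rwa [Real.cos_pi_div_three] at h1
  have hl2 : l = 2 * Real.cos θ := by rw [hl, hθ]; rfl
  have hlpos : 0 < l := by rw [hl2]; linarith
  have hsin : ∀ k : ℕ, 1 ≤ k → k < p → 0 < Real.sin ((k:ℝ) * θ) := by
    intro k hk1 hkp
    apply Real.sin_pos_of_pos_of_lt_pi
    · have : (1:ℝ) ≤ (k:ℝ) := by exact_mod_cast hk1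
      nlinarith
    · have hkp' : (k:ℝ) < (p:ℝ) := by exact_mod_cast hkp
      have : (k:ℝ) * θ < (p:ℝ) * θ := by
        exact mul_lt_mul_of_pos_right hkp' hθpos
      have hpθ : (p:ℝ) * θ = Real.pi := by
        rw [hθ]; field_simp
      linarith
  have hid : ∀ A : ℝ, Real.sin (A + θ) + Real.sin (A - θ) = 2 * Real.sin A * Real.cos θ := by
    intro A; rw [Real.sin_add, Real.sin_sub]; ring
  have h2θ : Real.sin (2*θ) = l * Real.sin θ := by
    rw [Real.sin_two_mul, hl2]; ring
  have hlow : ∀ n, pq l α n = 1 → 0 ≤ cq l α n ∧ cq l α n < l := by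
    intro n h
    have hfl : ⌊cq l α n / l⌋ = 0 := by
      unfold pq at h; omega
    have hm1 := Int.floor_eq_zero_iff.mp hfl
    simp only [Set.mem_Ico] at hm1
    constructor
    · have := mul_nonneg hm1.1 hlpos.le
      rwa [div_mul_cancel₀ _ hlpos.ne'] at this
    · exact (div_lt_one hlpos).mp hm1.2
  have hrec : ∀ n, pq l α n = 1 → cq l α (n+1) = 1/(l - cq l α n) := by
    intro n h
    have hfl : ⌊cq l α n / l⌋ = 0 := by
      unfold pq at h; omega
    show (1 : ℝ) / (((⌊cq l α n / l⌋ : ℝ) + 1) * l - cq l α n) = _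
    rw [hfl]; push_cast; ring_nf
  -- base case: cq l α m ≥ 1/l
  have hbase : 1 / l ≤ cq l α m := by
    obtain ⟨m', rfl⟩ : ∃ m', m = m' + 1 := ⟨m - 1, by omega⟩
    set x := cq l α m' with hx
    have hshow : cq l α (m' + 1) = 1 / (((⌊x / l⌋ : ℝ) + 1) * l - x) := rfl
    have hfl1 : (⌊x/l⌋ : ℝ) ≤ x / l := Int.floor_le _
    have hfl2 : x / l < (⌊x/l⌋ : ℝ) + 1 := Int.lt_floor_add_one _
    have hd1 : 0 < ((⌊x/l⌋ : ℝ) + 1) * l - x := by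
      have := mul_lt_mul_of_pos_right hfl2 hlpos
      rw [div_mul_cancel₀ _ hlpos.ne'] at this
      linarith
    have hd2 : ((⌊x/l⌋ : ℝ) + 1) * l - x ≤ l := by
      have := mul_le_mul_of_nonneg_right hfl1 hlpos.le
      rw [div_mul_cancel₀ _ hlpos.ne'] at this
      linarith
    rw [hshow]
    exact one_div_le_one_div_of_le hd1 hd2
  have key : ∀ j : ℕ, j ≤ p - 3 →
      Real.sin (((j:ℝ)+1)*θ) / Real.sin (((j:ℝ)+2)*θ) ≤ cq l α (m+j) := by
    intro j
    induction j with
    | zero =>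
      intro _
      have hsθ : 0 < Real.sin θ := by
        have := hsin 1 le_rfl (by omega)
        simpa using this
      have : Real.sin θ / Real.sin (2*θ) = 1 / l := by
        rw [h2θ]
        field_simp
      simpa [this] using hbase
    | succ j ih =>
      intro hj
      have hj' : j ≤ p - 3 := by omega
      have hjp : j + 3 < p := by omega
      have hpq := hall j hj'
      obtain ⟨h0, h1⟩ := hlow _ hpq
      have hb := ih hj'
      have hs1 : 0 < Real.sin (((j:ℝ)+1)*θ) := by
        have := hsin (j+1) (by omega) (by omega)
        push_cast at this; convert this using 2
      have hs2 : 0 < Real.sin (((j:ℝ)+2)*θ) := by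
        have := hsin (j+2) (by omega) (by omega)
        push_cast at this; convert this using 2
      have hs3 : 0 < Real.sin (((j:ℝ)+3)*θ) := by
        have := hsin (j+3) (by omega) hjp
        push_cast at this; convert this using 2
      -- identity: sin((j+3)θ) = l * sin((j+2)θ) - sin((j+1)θ)
      have hident : Real.sin (((j:ℝ)+3)*θ) = l * Real.sin (((j:ℝ)+2)*θ) - Real.sin (((j:ℝ)+1)*θ) := by
        have := hid (((j:ℝ)+2)*θ)
        have e1 : ((j:ℝ)+2)*θ + θ = ((j:ℝ)+3)*θ := by ring
        have e2 : ((j:ℝ)+2)*θ - θ = ((j:ℝ)+1)*θ := by ring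
        rw [e1, e2] at this
        rw [hl2]; linarith
      have hub : l - cq l α (m+j) ≤ Real.sin (((j:ℝ)+3)*θ) / Real.sin (((j:ℝ)+2)*θ) := by
        rw [hident]
        rw [sub_div, mul_div_assoc, div_self hs2.ne', mul_one]
        linarith
      have hpos : 0 < l - cq l α (m+j) := by linarith
      have := one_div_le_one_div_of_le hpos hub
      rw [one_div_div] at this
      have hstep : cq l α (m + (j+1)) = 1/(l - cq l α (m+j)) := by
        have := hrec (m+j) hpq
        rw [← this]; ring_nf
      rw [hstep]
      have hc1 : ((j:ℝ)+2) = (((j+1:ℕ):ℝ)+1) := by push_cast; ring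
      have hc2 : ((j:ℝ)+3) = (((j+1:ℕ):ℝ)+2) := by push_cast; ring
      rw [hc1, hc2] at this
      exact this
  -- conclusion
  have hfin := key (p-3) le_rfl
  have hpq := hall (p-3) le_rfl
  obtain ⟨h0, h1⟩ := hlow _ hpq
  have hcast : ((p-3:ℕ):ℝ) = (p:ℝ) - 3 := by
    have : (3:ℕ) ≤ p := hp
    push_cast [Nat.cast_sub this]; ring
  have hang1 : (((p-3:ℕ):ℝ)+1)*θ = Real.pi - 2*θ := by
    rw [hcast, hθ]; field_simp; ring
  have hang2 : (((p-3:ℕ):ℝ)+2)*θ = Real.pi - θ := by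
    rw [hcast, hθ]; field_simp; ring
  rw [hang1, hang2, Real.sin_pi_sub, Real.sin_pi_sub] at hfin
  have hsθ : 0 < Real.sin θ := by
    have := hsin 1 le_rfl (by omega)
    simpa using this
  have : Real.sin (2*θ) / Real.sin θ = l := by
    rw [h2θ]; field_simp
  rw [this] at hfin
  linarith
end
end

section
/- Fix an integer p ≥ 3 and let λ = 2cos(π/p). Let α ∈ ℝ with partial quotients (r_j) produced by the λ-continued-fraction algorithm. Then the p−1 initial partial quotients r_0, r_1, …, r_{p−2} are not all equal to 1; that is, the expansion begins with at most p−2 consecutive ones. -/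
open Real Matrix Filter

noncomputable section

/-!
If `r_0 = ⋯ = r_{p-2} = 1`, then `0 ≤ α_j < λ` and `α_{j+1} = 1 / (λ - α_j)` for
`j ≤ p - 2`. With `θ = π / p`, the ratios `s_j = sin (j θ) / sin ((j + 1) θ)` start at
`s_0 = 0` and obey the same recursion `s_{j+1} = 1 / (λ - s_j)`, because
`sin ((j + 2) θ) = λ sin ((j + 1) θ) - sin (j θ)`. Since `x ↦ 1 / (λ - x)` is increasing
on `x < λ`, induction gives `s_j ≤ α_j`. But `s_{p-2} = sin 2θ / sin θ = λ`, contradicting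
`α_{p-2} < λ`.
-/

theorem cq_succ (l α : ℝ) (j : ℕ) :
    cq l α (j + 1) = 1 / (pq l α j * l - cq l α j) := by
  simp only [cq, pq, Int.cast_add, Int.cast_one]

theorem pq_eq_one_iff {l : ℝ} (hl : 0 < l) (α : ℝ) (j : ℕ) :
    pq l α j = 1 ↔ 0 ≤ cq l α j ∧ cq l α j < l := by
  rw [pq, add_eq_right, Int.floor_eq_zero_iff, Set.mem_Ico, le_div_iff₀ hl, div_lt_iff₀ hl,
    zero_mul, one_mul]

theorem cq_succ_of_pq_eq_one {l α : ℝ} {j : ℕ} (h : pq l α j = 1) :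
    cq l α (j + 1) = 1 / (l - cq l α j) := by
  rw [cq_succ, h, Int.cast_one, one_mul]

theorem two_mul_cos_mul_sin_sub_sin (θ t : ℝ) :
    2 * cos θ * sin ((t + 1) * θ) - sin (t * θ) = sin ((t + 2) * θ) := by
  have h₁ : (t + 1) * θ = t * θ + θ := by ring
  have h₂ : (t + 2) * θ = t * θ + θ + θ := by ring
  rw [h₁, h₂, sin_add (t * θ + θ), sin_add, cos_add]
  linear_combination sin (t * θ) * sin_sq_add_cos_sq θ

theorem one_div_two_mul_cos_sub_sin_div_sin {θ t : ℝ} (h : sin ((t + 1) * θ) ≠ 0) :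
    1 / (2 * cos θ - sin (t * θ) / sin ((t + 1) * θ)) =
      sin ((t + 1) * θ) / sin ((t + 2) * θ) := by
  rw [sub_div' h, one_div_div, two_mul_cos_mul_sin_sub_sin]

theorem sin_div_sin_le_cq_of_pq_eq_one {θ α : ℝ} {n : ℕ} (hθ : 0 < θ)
    (hnθ : (n + 1) * θ < π) (hcos : 0 < cos θ) (h : ∀ j ≤ n, pq (2 * cos θ) α j = 1) :
    sin (n * θ) / sin ((n + 1) * θ) ≤ cq (2 * cos θ) α n := by
  induction n with
  | zero =>
    simpa using ((pq_eq_one_iff (by positivity) α 0).1 (h 0 le_rfl)).1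
  | succ n ih =>
    push_cast at hnθ ⊢
    have hsin : 0 < sin ((n + 1) * θ) :=
      sin_pos_of_pos_of_lt_pi (by positivity) (by nlinarith)
    have hpq : pq (2 * cos θ) α n = 1 := h n n.le_succ
    have hlt := ((pq_eq_one_iff (by positivity) α n).1 hpq).2
    have hle := ih (by nlinarith) fun j hj => h j (hj.trans n.le_succ)
    rw [cq_succ_of_pq_eq_one hpq, add_assoc, one_add_one_eq_two,
      ← one_div_two_mul_cos_sub_sin_div_sin hsin.ne']
    exact one_div_le_one_div_of_le (by linarith) (by linarith)

theorem sin_div_sin_eq_two_mul_cos {θ t : ℝ} (h : (t + 2) * θ = π) (hθ : sin θ ≠ 0) :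
    sin (t * θ) / sin ((t + 1) * θ) = 2 * cos θ := by
  rw [show t * θ = π - 2 * θ by linarith, show (t + 1) * θ = π - θ by linarith,
    sin_pi_sub, sin_pi_sub, sin_two_mul]
  field_simp

/-- the `p - 1` initial partial quotients `r_0, …, r_{p-2}` are not
all equal to `1`. -/
theorem hecke_consecutive_ones_initial (p : ℕ) (hp : 3 ≤ p) (α : ℝ) :
    ¬ ∀ j : ℕ, j ≤ p - 2 → pq (heckeLambda p) α j = 1 := by
  intro h
  have hθ : 0 < π / p := by positivity
  have hθ_lt : π / p < π / 2 :=
    div_lt_div_of_pos_left pi_pos two_pos (by exact_mod_cast (by omega : 2 < p))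
  have hcos : 0 < cos (π / p) := cos_pos_of_mem_Ioo ⟨by linarith, hθ_lt⟩
  have hpθ : (((p - 2 : ℕ) : ℝ) + 2) * (π / p) = π := by
    rw [show ((p - 2 : ℕ) : ℝ) + 2 = p by norm_cast; omega]
    field_simp
  have hlower := sin_div_sin_le_cq_of_pq_eq_one hθ (by linarith) hcos h
  rw [sin_div_sin_eq_two_mul_cos hpθ (sin_pos_of_pos_of_lt_pi hθ (by linarith)).ne'] at hlower
  have hupper := ((pq_eq_one_iff (by simp only [heckeLambda]; positivity) α _).1 (h _ le_rfl)).2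
  exact hupper.not_ge hlower
end
end

section
/- Fix an integer p ≥ 3 and let λ = 2cos(π/p). Suppose α ∈ ℝ has a purely periodic λ-continued fraction: the algorithm applied to α yields partial quotients r_0, r_1, …, r_n with α_{n+1} = α_0 = α. Let W = S^{r_0}T S^{r_1}T ⋯ S^{r_n}T = [[a,b],[c,d]], which fixes α, assume |a + d| > 2, and let α' be the other real root of c x² + (d − a)x − b = 0 (the Hecke conjugate of α). Then the λ-continued-fraction algorithm applied to 1/α' yields the purely periodic expansion with reversed period: its partial quotients are r_n, r_{n−1}, …, r_0 repeating, i.e. 1/α' = [\overline{r_n; r_{n−1}, …, r_0}]. -/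
open Real Matrix Filter

noncomputable section

namespace HCF


def th (q : ℕ) : ℝ := Real.pi / (q+3)
def lam (q : ℕ) : ℝ := 2 * Real.cos (th q)
def sn (q k : ℕ) : ℝ := Real.sin (k * th q)
def vv (q k : ℕ) : ℝ := sn q (k+2) / sn q (k+1)

variable (q : ℕ)

lemma th_pos : 0 < th q := div_pos Real.pi_pos (by positivity)

lemma th_le : th q ≤ Real.pi / 3 := by
  apply div_le_div_of_nonneg_left Real.pi_pos.le (by norm_num)
  · push_cast; linarith [Nat.cast_nonneg (α := ℝ) q]

lemma lam_ge_one : 1 ≤ lam q := by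
  have h := Real.cos_le_cos_of_nonneg_of_le_pi (th_pos q).le
    (by linarith [Real.pi_pos]) (th_le q)
  rw [Real.cos_pi_div_three] at h
  unfold lam; linarith

lemma lam_pos : 0 < lam q := lt_of_lt_of_le one_pos (lam_ge_one q)

lemma sn_pos {k : ℕ} (h1 : 1 ≤ k) (h2 : k ≤ q + 2) : 0 < sn q k := by
  apply Real.sin_pos_of_pos_of_lt_pi
  · have h := th_pos q
    have h1' : (1:ℝ) ≤ (k:ℝ) := by exact_mod_cast h1
    nlinarith
  · unfold th
    have hq3 : (0:ℝ) < (q:ℝ) + 3 := by positivity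
    have e : (Real.pi/((q:ℝ)+3))*((q:ℝ)+3) = Real.pi := div_mul_cancel₀ _ hq3.ne'
    have hk : (k:ℝ) ≤ (q:ℝ) + 2 := by exact_mod_cast h2
    nlinarith [Real.pi_pos, th_pos q]

lemma srec (k : ℕ) : sn q (k+2) = lam q * sn q (k+1) - sn q k := by
  have h1 : ((k+2 : ℕ) : ℝ) * th q = ((k+1 : ℕ):ℝ) * th q + th q := by push_cast; ring
  have h2 : ((k : ℕ) : ℝ) * th q = ((k+1 : ℕ):ℝ) * th q - th q := by push_cast; ring
  unfold sn lam
  rw [h1, h2, Real.sin_add, Real.sin_sub]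
  ring

lemma sinth_ne : Real.sin (th q) ≠ 0 := by
  have := sn_pos q (k := 1) le_rfl (by omega)
  unfold sn at this; norm_num at this; exact this.ne'

lemma lam_eq : lam q = sn q 2 / sn q 1 := by
  have h1 := sinth_ne q
  unfold lam sn
  push_cast
  rw [show (2:ℝ) * th q = th q + th q by ring, Real.sin_add, one_mul]
  field_simp
  ring

lemma ssym1 : sn q (q+2) = sn q 1 := by
  have : ((q+2 : ℕ) : ℝ) * th q = Real.pi - 1 * th q := by
    unfold th; push_cast; field_simp; ring
  unfold sn; rw [this, Real.sin_pi_sub]; norm_num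

lemma ssym2 : sn q (q+1) = sn q 2 := by
  have : ((q+1 : ℕ) : ℝ) * th q = Real.pi - 2 * th q := by
    unfold th; push_cast; field_simp; ring
  unfold sn; rw [this, Real.sin_pi_sub]; norm_num

lemma vv_pos {k : ℕ} (h : k ≤ q) : 0 < vv q k :=
  div_pos (sn_pos q (by omega) (by omega)) (sn_pos q (by omega) (by omega))

lemma vv_zero : vv q 0 = lam q := by
  rw [lam_eq]; rfl

lemma vv_last : vv q q = 1 / lam q := by
  unfold vv
  rw [ssym1, ssym2, lam_eq, one_div_div]

lemma vv_rec {k : ℕ} (h : k + 1 ≤ q) : vv q (k+1) = lam q - 1 / vv q k := by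
  have h2 : sn q (k+2) ≠ 0 := (sn_pos q (by omega) (by omega)).ne'
  have h1 : sn q (k+1) ≠ 0 := (sn_pos q (by omega) (by omega)).ne'
  have hs := srec q (k+1)
  unfold vv
  rw [one_div_div, hs]
  field_simp

lemma vv_rec' {k : ℕ} (h : k + 1 ≤ q) : lam q - vv q (k+1) = 1 / vv q k := by
  rw [vv_rec q h]; ring

lemma vv_succ_lt {k : ℕ} (h : k + 1 ≤ q) : vv q (k+1) < vv q k := by
  induction k with
  | zero =>
    rw [vv_rec q h, vv_zero]
    have := lam_pos q
    have : 0 < 1 / lam q := by positivity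
    linarith
  | succ m ih =>
    have hm : m + 1 ≤ q := by omega
    have h1 := ih hm
    have p1 := vv_pos q (show m ≤ q by omega)
    have p2 := vv_pos q (show m+1 ≤ q by omega)
    rw [vv_rec q h]
    have e := vv_rec q hm
    have : 1 / vv q m < 1 / vv q (m+1) := one_div_lt_one_div_of_lt p2 h1
    linarith

lemma vv_anti {k m : ℕ} (hkm : k ≤ m) (h : m ≤ q) : vv q m ≤ vv q k := by
  induction m with
  | zero => simp_all
  | succ i ih =>
    rcases Nat.eq_or_lt_of_le hkm with rfl | hlt
    · exact le_refl _
    · have h1 := vv_succ_lt q h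
      have h2 := ih (by omega) (by omega)
      linarith

lemma vv_strict_anti {k m : ℕ} (hkm : k < m) (h : m ≤ q) : vv q m < vv q k := by
  rcases Nat.exists_eq_add_of_lt hkm with ⟨d, rfl⟩
  calc vv q (k + d + 1) < vv q k + 0 := by
        have h1 := vv_succ_lt q (show k + d + 1 ≤ q by omega)
        have h2 := vv_anti q (show k ≤ k + d by omega) (show k + d ≤ q by omega)
        linarith
    _ = vv q k := by ring

lemma vv_le_lam {k : ℕ} (h : k ≤ q) : vv q k ≤ lam q := by
  have := vv_anti q (Nat.zero_le k) h
  rwa [vv_zero] at this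

lemma vv_ge {k : ℕ} (h : k ≤ q) : 1 / lam q ≤ vv q k := by
  have := vv_anti q h le_rfl
  rwa [vv_last] at this

lemma vv_inj {k m : ℕ} (hk : k ≤ q) (hm : m ≤ q) (h : vv q k = vv q m) : k = m := by
  rcases lt_trichotomy k m with hlt | he | hgt
  · have := vv_strict_anti q hlt hm; linarith
  · exact he
  · have := vv_strict_anti q hgt hk; linarith

lemma heckeLambda_eq : (2 : ℝ) * Real.cos (Real.pi / ((q:ℝ)+3)) = lam q := by
  unfold lam th; norm_num


lemma sn_zero (q : ℕ) : sn q 0 = 0 := by unfold sn; norm_num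
lemma sn_one (q : ℕ) : sn q 1 = Real.sin (th q) := by unfold sn; norm_num
def Mm (l : ℝ) (d : ℤ) : Matrix (Fin 2) (Fin 2) ℝ := !![(d:ℝ)*l, -1; 1, 0]

def Pw (l : ℝ) (ρ : ℕ → ℤ) (t : ℕ) : ℕ → Matrix (Fin 2) (Fin 2) ℝ
  | 0 => 1
  | u+1 => Pw l ρ t u * Mm l (ρ (t+u))

lemma det_Mm (l : ℝ) (d : ℤ) : (Mm l d).det = 1 := by
  rw [Mm, Matrix.det_fin_two_of]; ring

lemma det_Pw (l : ℝ) (ρ : ℕ → ℤ) (t u : ℕ) : (Pw l ρ t u).det = 1 := by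
  induction u with
  | zero => simp [Pw]
  | succ v ih => rw [Pw, Matrix.det_mul, ih, det_Mm, mul_one]

lemma Pw_add (l : ℝ) (ρ : ℕ → ℤ) (t u v : ℕ) :
    Pw l ρ t (u+v) = Pw l ρ t u * Pw l ρ (t+u) v := by
  induction v with
  | zero => simp [Pw]
  | succ w ih =>
    rw [show u + (w+1) = (u+w)+1 by ring, Pw, ih, Pw, mul_assoc,
      show t + (u+w) = t + u + w by ring]

lemma Pw_congr {l : ℝ} {ρ ρ' : ℕ → ℤ} {t t' : ℕ} (u : ℕ)
    (h : ∀ i, i < u → ρ (t+i) = ρ' (t'+i)) : Pw l ρ t u = Pw l ρ' t' u := by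
  induction u with
  | zero => rfl
  | succ v ih =>
    rw [Pw, Pw, ih (fun i hi => h i (by omega)), h v (by omega)]

lemma Pw_const {l : ℝ} {ρ : ℕ → ℤ} {t : ℕ} (d : ℤ) (u : ℕ)
    (h : ∀ i, i < u → ρ (t+i) = d) : Pw l ρ t u = (Mm l d)^u := by
  induction u with
  | zero => rfl
  | succ v ih =>
    rw [Pw, ih (fun i hi => h i (by omega)), h v (by omega), pow_succ]

lemma Pw_pow {l : ℝ} {ρ : ℕ → ℤ} {t c : ℕ}
    (hper : ∀ u, ρ (t + u + c) = ρ (t + u)) (i : ℕ) :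
    Pw l ρ t (i*c) = (Pw l ρ t c)^i := by
  have hperi : ∀ i u, ρ (t + u + i*c) = ρ (t + u) := by
    intro i
    induction i with
    | zero => simp
    | succ m ih =>
      intro u
      rw [show t + u + (m+1)*c = t + (u + m*c) + c by ring, hper,
        show t + (u + m*c) = t + u + m*c by ring, ih]
  induction i with
  | zero => rw [Nat.zero_mul, pow_zero]; rfl
  | succ m ih =>
    rw [show (m+1)*c = m*c + c by ring, Pw_add, ih, pow_succ]
    congr 1
    apply Pw_congr
    intro i hi
    rw [show t + m*c + i = t + i + m*c by ring, hperi]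

lemma SmatZ_Tmat (l : ℝ) (d : ℤ) : SmatZ l d * Tmat = Mm l d := by
  ext i j
  fin_cases i <;> fin_cases j <;>
    simp [SmatZ, Tmat, Mm, Matrix.mul_apply, Fin.sum_univ_two]

lemma cfWord_eq (l : ℝ) (r : ℕ → ℤ) (n : ℕ) : cfWord l r n = Pw l r 0 (n+1) := by
  suffices h : ∀ u, ((List.range u).map fun j => SmatZ l (r j) * Tmat).prod = Pw l r 0 u from h (n+1)
  intro u
  induction u with
  | zero => simp [Pw]
  | succ v ih =>
    rw [List.range_succ, List.map_append, List.prod_append, ih, Pw]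
    simp [SmatZ_Tmat]

lemma Mpow (q k : ℕ) : sn q 1 • ((Mm (lam q) 1)^(k+1)) =
    !![sn q (k+2), -(sn q (k+1)); sn q (k+1), -(sn q k)] := by
  induction k with
  | zero =>
    rw [pow_one]
    ext i j
    have h2 : sn q 2 = lam q * sn q 1 - sn q 0 := srec q 0
    rw [sn_zero] at h2
    fin_cases i <;> fin_cases j <;>
      simp [Mm, Matrix.smul_apply, sn_zero] <;> rw [h2] <;> push_cast <;> ring
  | succ m ih =>
    rw [pow_succ, ← Matrix.smul_mul, ih]
    ext i j
    have h3 := srec q (m+1)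
    fin_cases i <;> fin_cases j <;>
      simp [Mm, Matrix.mul_apply, Fin.sum_univ_two] <;> push_cast <;>
      linarith [srec q m, srec q (m+1)]

lemma lam_zero : lam 0 = 1 := by
  unfold lam th
  norm_num [Real.cos_pi_div_three]

lemma trace_block (q : ℕ) : Matrix.trace (Mm (lam q) 2 * (Mm (lam q) 1)^q) = 2 := by
  cases q with
  | zero =>
    rw [pow_zero, mul_one, Matrix.trace_fin_two]
    simp [Mm, lam_zero]
  | succ k =>
    have hs := sinth_ne (k+1)
    have h1 : sn (k+1) 1 ≠ 0 := by rw [sn_one]; exact hs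
    have key : sn (k+1) 1 • (Mm (lam (k+1)) 2 * (Mm (lam (k+1)) 1)^(k+1))
        = Mm (lam (k+1)) 2 * (sn (k+1) 1 • (Mm (lam (k+1)) 1)^(k+1)) := by
      rw [Matrix.mul_smul]
    have h2 : Matrix.trace (sn (k+1) 1 • (Mm (lam (k+1)) 2 * (Mm (lam (k+1)) 1)^(k+1)))
        = sn (k+1) 1 * Matrix.trace (Mm (lam (k+1)) 2 * (Mm (lam (k+1)) 1)^(k+1)) := by
      rw [Matrix.trace_smul]; rfl
    rw [key, Mpow] at h2
    have h3 : Matrix.trace (Mm (lam (k+1)) 2 *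
        !![sn (k+1) (k+2), -(sn (k+1) (k+1)); sn (k+1) (k+1), -(sn (k+1) k)]) =
        2 * (lam (k+1) * sn (k+1) (k+2) - sn (k+1) (k+1)) := by
      rw [Matrix.trace_fin_two]
      simp [Mm, Matrix.mul_apply, Fin.sum_univ_two]
      push_cast
      ring
    rw [h3] at h2
    have h4 : lam (k+1) * sn (k+1) (k+2) - sn (k+1) (k+1) = sn (k+1) (k+3) := by
      have := srec (k+1) (k+1); linarith
    have h5 : sn (k+1) (k+3) = sn (k+1) 1 := by
      have := ssym1 (k+1)
      rwa [show k+1+2 = k+3 by ring] at this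
    rw [h4, h5] at h2
    have : sn (k+1) 1 * 2 = sn (k+1) 1 * Matrix.trace (Mm (lam (k+1)) 2 * (Mm (lam (k+1)) 1)^(k+1)) := by
      rw [← h2]; ring
    have := mul_left_cancel₀ h1 this
    linarith [this]
lemma trace_pow_parabolic (B : Matrix (Fin 2) (Fin 2) ℝ) (htr : Matrix.trace B = 2)
    (hdet : B.det = 1) (k : ℕ) : Matrix.trace (B^(k+1)) = 2 := by
  have ht : B 0 0 + B 1 1 = 2 := by rw [Matrix.trace_fin_two] at htr; exact htr
  have hd : B 0 0 * B 1 1 - B 0 1 * B 1 0 = 1 := by rw [Matrix.det_fin_two] at hdet; exact hdet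
  have hB : B * B = (2:ℝ) • B - 1 := by
    ext i j
    fin_cases i <;> fin_cases j <;>
      simp [Matrix.mul_apply, Fin.sum_univ_two, Matrix.sub_apply, Matrix.smul_apply,
        Matrix.one_apply]
    · linear_combination B 0 0 * ht - hd
    · linear_combination B 0 1 * ht
    · linear_combination B 1 0 * ht
    · linear_combination B 1 1 * ht - hd
  have key : ∀ m : ℕ, B^(m+1) = ((m:ℝ)+1) • B - (m:ℝ) • (1 : Matrix (Fin 2) (Fin 2) ℝ) := by
    intro m
    induction m with
    | zero => simp
    | succ u ih =>
      rw [pow_succ, ih, sub_mul, smul_mul_assoc, smul_mul_assoc, hB, one_mul]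
      push_cast
      rw [smul_sub]
      ext i j
      simp [Matrix.sub_apply, Matrix.smul_apply]
      ring
  rw [key k, Matrix.trace_sub, Matrix.trace_smul, Matrix.trace_smul, Matrix.trace_one,
    Matrix.trace_fin_two, ht]
  simp
  ring

def chain (l : ℝ) (ρ : ℕ → ℤ) : ℕ → ℝ → ℝ
  | 0 => fun x => x
  | j+1 => fun x => 1 / ((ρ j : ℝ) * l - chain l ρ j x)

lemma chain_vec {l : ℝ} {ρ : ℕ → ℤ} {x : ℝ} {N : ℕ}
    (hpos : ∀ j, j < N → 0 < (ρ j : ℝ) * l - chain l ρ j x) :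
    ∃ c : ℝ, 0 < c ∧ (Pw l ρ 0 N).mulVec ![chain l ρ N x, 1] = c • ![x, 1] := by
  induction N with
  | zero =>
    exact ⟨1, one_pos, by simp [Pw, chain]⟩
  | succ u ih =>
    obtain ⟨c, hc, hvec⟩ := ih (fun j hj => hpos j (by omega))
    have hd := hpos u (by omega)
    set d : ℝ := (ρ u : ℝ) * l - chain l ρ u x with hdd
    have hz : chain l ρ (u+1) x = 1 / d := rfl
    have hzpos : 0 < 1/d := by positivity
    have hstep : (Mm l (ρ u)).mulVec ![chain l ρ (u+1) x, 1]
        = (1/d) • ![chain l ρ u x, 1] := by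
      rw [hz]
      ext i
      fin_cases i <;>
        simp [Mm, Matrix.mulVec, dotProduct, Fin.sum_univ_two] <;>
        field_simp <;> ring
    refine ⟨(1/d) * c, by positivity, ?_⟩
    rw [Pw, show (0:ℕ) + u = u by ring, ← Matrix.mulVec_mulVec, hstep,
      Matrix.mulVec_smul, hvec, smul_smul]

lemma chain_quad {l : ℝ} {ρ : ℕ → ℤ} {x : ℝ} {N : ℕ}
    (hpos : ∀ j, j < N → 0 < (ρ j : ℝ) * l - chain l ρ j x)
    (hfix : chain l ρ N x = x) :
    (Pw l ρ 0 N) 1 0 * x^2 + ((Pw l ρ 0 N) 1 1 - (Pw l ρ 0 N) 0 0) * x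
      - (Pw l ρ 0 N) 0 1 = 0 := by
  obtain ⟨c, hc, hvec⟩ := chain_vec hpos
  rw [hfix] at hvec
  have h0 := congrFun hvec 0
  have h1 := congrFun hvec 1
  simp [Matrix.mulVec, dotProduct, Fin.sum_univ_two] at h0 h1
  linear_combination x * h1 - h0

lemma quad_roots {c e f x y z : ℝ} (hxy : x ≠ y) (hc : c ≠ 0)
    (hx : c*x^2 + e*x + f = 0) (hy : c*y^2 + e*y + f = 0) (hz : c*z^2 + e*z + f = 0) :
    z = x ∨ z = y := by
  by_contra hcon
  push_neg at hcon
  obtain ⟨h1, h2⟩ := hcon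
  have e1 : (z - x) * (c*(z+x) + e) = 0 := by nlinarith
  have e2 : (z - y) * (c*(z+y) + e) = 0 := by nlinarith
  have f1 : c*(z+x) + e = 0 := by
    rcases mul_eq_zero.mp e1 with h | h
    · exact absurd (by linarith : z = x) h1
    · exact h
  have f2 : c*(z+y) + e = 0 := by
    rcases mul_eq_zero.mp e2 with h | h
    · exact absurd (by linarith : z = y) h2
    · exact h
  have : c * (x - y) = 0 := by linarith
  rcases mul_eq_zero.mp this with h | h
  · exact hc h
  · exact hxy (by linarith)

structure Orb (q : ℕ) (A : ℕ → ℝ) (ρ : ℕ → ℤ) : Prop where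
  step : ∀ j, A (j+1) = 1 / ((ρ j : ℝ) * lam q - A j)
  low : ∀ j, ((ρ j : ℝ) - 1) * lam q ≤ A j
  high : ∀ j, A j < (ρ j : ℝ) * lam q
  ge : ∀ j, 1 / lam q ≤ A j

namespace Orb
variable {q : ℕ} {A : ℕ → ℝ} {ρ : ℕ → ℤ} (H : Orb q A ρ)
include H

lemma pos (j : ℕ) : 0 < A j := by
  have h1 := H.ge j
  have h2 := lam_pos q
  have : 0 < 1 / lam q := by positivity
  linarith

lemma den_pos (j : ℕ) : 0 < (ρ j : ℝ) * lam q - A j := by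
  have := H.high j; linarith

lemma den_le (j : ℕ) : (ρ j : ℝ) * lam q - A j ≤ lam q := by
  have := H.low j; nlinarith [lam_pos q]

lemma rho_one (j : ℕ) : 1 ≤ ρ j := by
  have h1 := H.pos j
  have h2 := H.high j
  have h3 := lam_pos q
  have : (0:ℝ) < (ρ j : ℝ) := by nlinarith
  have : (0:ℤ) < ρ j := by exact_mod_cast this
  omega

lemma rho_det {a b : ℕ} (h : A a = A b) : ρ a = ρ b := by
  have l1 := H.low a; have l2 := H.low b
  have h1 := H.high a; have h2 := H.high b
  have hl := lam_pos q
  rw [h] at l1 h1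
  have e1 : ((ρ a : ℝ) - 1) * lam q < (ρ b : ℝ) * lam q := lt_of_le_of_lt l1 h2
  have e2 : ((ρ b : ℝ) - 1) * lam q < (ρ a : ℝ) * lam q := lt_of_le_of_lt l2 h1
  have f1 : (ρ a : ℝ) - 1 < (ρ b : ℝ) := by nlinarith
  have f2 : (ρ b : ℝ) - 1 < (ρ a : ℝ) := by nlinarith
  have g1 : ρ a - 1 < ρ b := by exact_mod_cast f1
  have g2 : ρ b - 1 < ρ a := by exact_mod_cast f2
  omega

lemma det {a b : ℕ} (h : A a = A b) : ∀ u, A (a+u) = A (b+u) := by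
  intro u
  induction u with
  | zero => simpa using h
  | succ v ih =>
    have hr : ρ (a+v) = ρ (b+v) := H.rho_det ih
    have e1 := H.step (a+v)
    have e2 := H.step (b+v)
    rw [show a + (v+1) = (a+v) + 1 by ring, show b + (v+1) = (b+v) + 1 by ring, e1, e2, ih, hr]

lemma run_bdd (j : ℕ) : ¬ (∀ i, i ≤ q → ρ (j+i) = 1) := by
  intro hall
  have key : ∀ i, i ≤ q → A (j + (q - i)) < vv q i := by
    intro i
    induction i with
    | zero =>
      intro _
      have h1 := H.high (j + (q - 0))
      rw [hall (q-0) (by omega)] at h1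
      rw [vv_zero]
      simpa using h1
    | succ m ih =>
      intro hm
      have ihm := ih (by omega)
      set t := j + (q - (m+1)) with ht
      have hidx : t + 1 = j + (q - m) := by omega
      have hst := H.step t
      have hρt : ρ t = 1 := hall (q - (m+1)) (by omega)
      rw [hρt] at hst
      have hdpos : 0 < (1 : ℝ) * lam q - A t := by
        have := H.den_pos t; rw [hρt] at this; push_cast at this; exact this
      have hden : 0 < lam q - A t := by linarith
      have hd : A (t+1) = 1 / (lam q - A t) := by rw [hst]; norm_num
      have hA1 : A (t+1) < vv q m := by rw [hidx]; exact ihm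
      have hA1pos : 0 < A (t+1) := H.pos _
      have hvm : 0 < vv q m := vv_pos q (by omega)
      have h1 : 1 < vv q m * (lam q - A t) := by
        rw [hd] at hA1
        have := (div_lt_iff₀ hden).mp hA1
        nlinarith
      have h1d : 1 / vv q m < lam q - A t := by
        rw [div_lt_iff₀ hvm]
        nlinarith
      have : A t < vv q (m+1) := by
        rw [vv_rec q hm]
        linarith
      exact this
  have := key q le_rfl
  simp only [Nat.sub_self] at this
  rw [vv_last] at this
  have := H.ge (j + 0)
  linarith [H.ge (j+0)]

lemma run (j : ℕ) : ∃ i, ρ (j+i) ≠ 1 := by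
  by_contra hc
  push_neg at hc
  exact H.run_bdd j (fun i _ => hc i)

def mrun (j : ℕ) : ℕ := Nat.find (H.run j)

lemma mrun_spec (j : ℕ) : ρ (j + H.mrun j) ≠ 1 := Nat.find_spec (H.run j)

lemma mrun_min {j i : ℕ} (h : i < H.mrun j) : ρ (j + i) = 1 := by
  have := Nat.find_min (H.run j) h
  simpa using this

lemma mrun_le (j : ℕ) : H.mrun j ≤ q := by
  by_contra hc
  push_neg at hc
  exact H.run_bdd j (fun i hi => H.mrun_min (lt_of_le_of_lt hi hc))

lemma mrun_zero {j : ℕ} (h : ρ j ≠ 1) : H.mrun j = 0 := by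
  by_contra hc
  have := H.mrun_min (Nat.pos_of_ne_zero hc)
  simpa using h this

lemma mrun_pos {j : ℕ} (h : ρ j = 1) : 1 ≤ H.mrun j := by
  by_contra hc
  push_neg at hc
  have h0 : H.mrun j = 0 := by omega
  have := H.mrun_spec j
  rw [h0] at this
  simp at this
  exact this h

lemma mrun_succ {j : ℕ} (h : ρ j = 1) : H.mrun (j+1) = H.mrun j - 1 := by
  have h1 := H.mrun_pos h
  rw [show H.mrun (j+1) = Nat.find (H.run (j+1)) from rfl, Nat.find_eq_iff]
  constructor
  · have := H.mrun_spec j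
    rw [show j + 1 + (H.mrun j - 1) = j + H.mrun j by omega]
    exact this
  · intro i hi
    simp only [ne_eq, not_not]
    rw [show j + 1 + i = j + (i+1) by omega]
    exact H.mrun_min (by omega)

lemma rho_ge_two {j : ℕ} (h : ρ j ≠ 1) : 2 ≤ ρ j := by
  have := H.rho_one j; omega

/-- the key invariance step for the conjugate orbit -/
lemma step_bound {j : ℕ} {x : ℝ} (hx0 : 0 ≤ x) (hx : x ≤ vv q (H.mrun j)) :
    0 < (ρ j : ℝ) * lam q - x ∧ 1 / ((ρ j : ℝ) * lam q - x) ≤ vv q (H.mrun (j+1)) := by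
  by_cases h : ρ j = 1
  · set m := H.mrun j with hm
    have hm1 : 1 ≤ m := H.mrun_pos h
    have hmq : m ≤ q := H.mrun_le j
    have hrec : lam q - vv q m = 1 / vv q (m-1) := by
      have := vv_rec' q (k := m-1) (by omega)
      rw [show m - 1 + 1 = m by omega] at this
      exact this
    have hvm1 : 0 < vv q (m-1) := vv_pos q (by omega)
    have hden : 1 / vv q (m-1) ≤ lam q - x := by
      have := sub_le_sub_left hx (lam q)
      linarith [hrec ▸ this]
    have hdpos : 0 < lam q - x := lt_of_lt_of_le (by positivity) hden
    have hnext : H.mrun (j+1) = m - 1 := H.mrun_succ h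
    constructor
    · rw [h]; push_cast; linarith
    · rw [h, hnext]; push_cast
      rw [one_mul]
      calc 1 / (lam q - x) ≤ 1 / (1 / vv q (m-1)) := by
            apply one_div_le_one_div_of_le (by positivity) hden
        _ = vv q (m-1) := one_div_one_div _
  · have hm0 : H.mrun j = 0 := H.mrun_zero h
    have hρ2 : (2:ℝ) ≤ (ρ j : ℝ) := by exact_mod_cast H.rho_ge_two h
    have hlam := lam_pos q
    have hxl : x ≤ lam q := by
      rw [hm0] at hx; rwa [vv_zero] at hx
    have hden : lam q ≤ (ρ j : ℝ) * lam q - x := by nlinarith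
    have hdpos : 0 < (ρ j : ℝ) * lam q - x := lt_of_lt_of_le hlam hden
    refine ⟨hdpos, ?_⟩
    calc 1 / ((ρ j : ℝ) * lam q - x) ≤ 1 / lam q :=
          one_div_le_one_div_of_le hlam hden
      _ ≤ vv q (H.mrun (j+1)) := vv_ge q (H.mrun_le (j+1))

/-- forced step: if `A j` sits exactly on a cycle point -/
lemma forced {j k : ℕ} (hk : k ≤ q) (hj : A j = vv q k) :
    (1 ≤ k → ρ j = 1 ∧ A (j+1) = vv q (k-1)) ∧ (k = 0 → ρ j = 2 ∧ A (j+1) = vv q q) := by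
  have hlam := lam_pos q
  have hlow := H.low j
  have hhigh := H.high j
  rw [hj] at hlow hhigh
  constructor
  · intro hk1
    have hvlt : vv q k < lam q := by
      have := vv_strict_anti q (show 0 < k by omega) hk
      rwa [vv_zero] at this
    have hvpos : 0 < vv q k := vv_pos q hk
    have hρub : (ρ j : ℝ) - 1 < 1 := by nlinarith
    have hρlb : (0:ℝ) < (ρ j : ℝ) := by nlinarith
    have e1 : ρ j - 1 < 1 := by exact_mod_cast hρub
    have e2 : (0:ℤ) < ρ j := by exact_mod_cast hρlb
    have hρ : ρ j = 1 := by omega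
    refine ⟨hρ, ?_⟩
    have hrec : lam q - vv q k = 1 / vv q (k-1) := by
      have := vv_rec' q (k := k-1) (by omega)
      rw [show k - 1 + 1 = k by omega] at this
      exact this
    rw [H.step j, hρ, hj]
    push_cast
    rw [one_mul, hrec, one_div_one_div]
  · intro hk0
    subst hk0
    rw [vv_zero] at hj hlow hhigh
    have hρub : (ρ j : ℝ) - 1 ≤ 1 := by nlinarith
    have hρlb : (1:ℝ) < (ρ j : ℝ) := by nlinarith
    have e1 : ρ j - 1 ≤ 1 := by exact_mod_cast hρub
    have e2 : (1:ℤ) < ρ j := by exact_mod_cast hρlb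
    have hρ : ρ j = 2 := by omega
    refine ⟨hρ, ?_⟩
    rw [H.step j, hρ, hj, vv_last]
    push_cast
    norm_num
    rw [show (2:ℝ) * lam q - lam q = lam q by ring]

lemma down {j k : ℕ} (hk : k ≤ q) (hj : A j = vv q k) :
    ∀ d, d ≤ k → A (j+d) = vv q (k-d) := by
  intro d
  induction d with
  | zero => intro _; simpa using hj
  | succ e ih =>
    intro hd
    have ihe := ih (by omega)
    have hf := (H.forced (show k - e ≤ q by omega) ihe).1 (by omega)
    rw [show j + (e+1) = (j+e) + 1 by ring, hf.2, show k - e - 1 = k - (e+1) by omega]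

lemma cyc {j : ℕ} (hj : A j = vv q 0) : A (j + (q+1)) = vv q 0 := by
  have h0 := (H.forced (Nat.zero_le q) hj).2 rfl
  have hd := H.down le_rfl h0.2 q le_rfl
  rw [show j + (q+1) = j + 1 + q by ring, hd, Nat.sub_self]

lemma cyc_digits {j : ℕ} (hj : A j = vv q 0) :
    ρ j = 2 ∧ ∀ i, 1 ≤ i → i ≤ q → ρ (j+i) = 1 ∧ A (j+i) = vv q (q+1-i) := by
  have h0 := (H.forced (Nat.zero_le q) hj).2 rfl
  refine ⟨h0.1, fun i hi1 hiq => ?_⟩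
  have hd := H.down le_rfl h0.2 (i-1) (by omega)
  rw [show j + 1 + (i-1) = j + i by omega] at hd
  have : q - (i-1) = q+1-i := by omega
  rw [this] at hd
  have hf := (H.forced (show q+1-i ≤ q by omega) hd).1 (by omega)
  exact ⟨hf.1, hd⟩


lemma mrun_congr {a b : ℕ} (h : ∀ i, ρ (a+i) = ρ (b+i)) : H.mrun a = H.mrun b := by
  apply le_antisymm
  · apply Nat.find_min' (H.run a)
    rw [h]
    exact H.mrun_spec b
  · apply Nat.find_min' (H.run b)
    rw [← h]
    exact H.mrun_spec a

lemma chain_mem {x : ℝ} (hx0 : 0 ≤ x) (hxw : x ≤ vv q (H.mrun 0)) :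
    ∀ j, (0 ≤ chain (lam q) ρ j x ∧ chain (lam q) ρ j x ≤ vv q (H.mrun j))
       ∧ 0 < (ρ j : ℝ) * lam q - chain (lam q) ρ j x := by
  intro j
  induction j with
  | zero => exact ⟨⟨hx0, hxw⟩, (H.step_bound hx0 hxw).1⟩
  | succ m ih =>
    obtain ⟨⟨h0, h1⟩, hd⟩ := ih
    have hs := H.step_bound h0 h1
    have hc : chain (lam q) ρ (m+1) x = 1 / ((ρ m : ℝ) * lam q - chain (lam q) ρ m x) := rfl
    have hn0 : 0 ≤ chain (lam q) ρ (m+1) x := by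
      rw [hc]; positivity
    have hn1 : chain (lam q) ρ (m+1) x ≤ vv q (H.mrun (m+1)) := by
      rw [hc]; exact hs.2
    exact ⟨⟨hn0, hn1⟩, (H.step_bound hn0 hn1).1⟩

lemma chain_contOn : ∀ j, ContinuousOn (fun x => chain (lam q) ρ j x)
    (Set.Icc 0 (vv q (H.mrun 0))) := by
  intro j
  induction j with
  | zero => exact continuousOn_id
  | succ m ih =>
    show ContinuousOn (fun x => 1 / ((ρ m : ℝ) * lam q - chain (lam q) ρ m x)) _
    apply ContinuousOn.div continuousOn_const
    · exact (continuousOn_const.sub ih)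
    · intro x hx
      exact (H.chain_mem hx.1 hx.2 m).2.ne'

lemma deg_trace {n : ℕ}
    (hperA : ∀ j, A (j + (n+1)) = A j)
    (hle : A 0 ≤ vv q (H.mrun 0)) :
    Matrix.trace (Pw (lam q) ρ 0 (n+1)) = 2 := by
  have hm0q := H.mrun_le 0
  have desc : ∀ i, i ≤ H.mrun 0 → A i ≤ vv q (H.mrun 0 - i) := by
    intro i
    induction i with
    | zero => intro _; simpa using hle
    | succ m ih =>
      intro hm
      have ihm := ih (by omega)
      have hρ : ρ m = 1 := by
        have := H.mrun_min (j := 0) (i := m) (by omega)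
        simpa using this
      have hrec : lam q - vv q (H.mrun 0 - m) = 1 / vv q (H.mrun 0 - m - 1) := by
        have h := vv_rec' q (k := H.mrun 0 - m - 1) (by omega)
        rw [show H.mrun 0 - m - 1 + 1 = H.mrun 0 - m by omega] at h
        exact h
      have hvpos : 0 < vv q (H.mrun 0 - m - 1) := vv_pos q (by omega)
      have hden : 1 / vv q (H.mrun 0 - m - 1) ≤ lam q - A m := by
        rw [← hrec]; linarith
      have hdpos : 0 < lam q - A m := lt_of_lt_of_le (by positivity) hden
      have hA1 : A (m+1) = 1 / (lam q - A m) := by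
        rw [H.step m, hρ]; push_cast; rw [one_mul]
      rw [hA1, show H.mrun 0 - (m+1) = H.mrun 0 - m - 1 by omega]
      calc 1 / (lam q - A m) ≤ 1 / (1 / vv q (H.mrun 0 - m - 1)) :=
            one_div_le_one_div_of_le (by positivity) hden
        _ = vv q (H.mrun 0 - m - 1) := one_div_one_div _
  have reach : A (H.mrun 0) = vv q 0 := by
    have hup : A (H.mrun 0) ≤ vv q 0 := by
      have h := desc (H.mrun 0) le_rfl
      rwa [Nat.sub_self] at h
    have hρs : ρ (H.mrun 0) ≠ 1 := by
      have := H.mrun_spec 0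
      simpa using this
    have h2 : (2:ℝ) ≤ (ρ (H.mrun 0) : ℝ) := by exact_mod_cast H.rho_ge_two hρs
    have hlow := H.low (H.mrun 0)
    have hlam := lam_pos q
    have hla : lam q ≤ A (H.mrun 0) := by nlinarith
    rw [vv_zero] at hup ⊢
    linarith
  set s := (H.mrun 0) % (n+1) with hs
  have hsn : s < n+1 := Nat.mod_lt _ (by omega)
  have periter : ∀ t i, A (t + i*(n+1)) = A t := by
    intro t i
    induction i with
    | zero => simp
    | succ m ih => rw [show t + (m+1)*(n+1) = (t + m*(n+1)) + (n+1) by ring, hperA, ih]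
  have hsA : A s = vv q 0 := by
    have h' := periter s ((H.mrun 0)/(n+1))
    rw [show s + (H.mrun 0)/(n+1)*(n+1) = H.mrun 0 by
      rw [hs, mul_comm]; exact (Nat.mod_add_div _ _)] at h'
    rw [← h', reach]
  have cyciter : ∀ i, A (s + i*(q+1)) = vv q 0 := by
    intro i
    induction i with
    | zero => simpa using hsA
    | succ m ih =>
      rw [show s + (m+1)*(q+1) = (s + m*(q+1)) + (q+1) by ring]
      exact H.cyc ih
  have ht0 : (n+1) % (q+1) = 0 := by
    by_contra htne
    set t := (n+1) % (q+1) with htd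
    have ht1 : 1 ≤ t := Nat.pos_of_ne_zero htne
    have htq : t ≤ q := by
      have := Nat.mod_lt (n+1) (y := q+1) (by omega)
      omega
    have base := cyciter ((n+1)/(q+1))
    have hAt := ((H.cyc_digits base).2 t ht1 htq).2
    rw [show s + (n+1)/(q+1)*(q+1) + t = s + (n+1) by
      have h1 := Nat.mod_add_div (n+1) (q+1)
      have h2 : (n+1)/(q+1)*(q+1) = (q+1)*((n+1)/(q+1)) := Nat.mul_comm _ _
      omega] at hAt
    rw [hperA, hsA] at hAt
    have := vv_inj q (Nat.zero_le q) (show q+1-t ≤ q by omega) hAt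
    omega
  have hdig : ∀ u, ρ (s + u + (q+1)) = ρ (s + u) := by
    intro u
    have h1 : A (s + (q+1)) = A s := by rw [H.cyc hsA, hsA]
    have h2 := H.det h1 u
    exact H.rho_det (by rw [show s+u+(q+1) = s+(q+1)+u by ring, h2])
  have hρper : ∀ j, ρ (j + (n+1)) = ρ j := fun j => H.rho_det (hperA j)
  have comm1 : Matrix.trace (Pw (lam q) ρ 0 (n+1)) = Matrix.trace (Pw (lam q) ρ s (n+1)) := by
    have split1 : Pw (lam q) ρ 0 (n+1) = Pw (lam q) ρ 0 s * Pw (lam q) ρ s (n+1-s) := by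
      have h := Pw_add (lam q) ρ 0 s (n+1-s)
      rw [show s + (n+1-s) = n+1 by omega, Nat.zero_add] at h
      exact h
    rw [split1, Matrix.trace_mul_comm]
    congr 1
    have e1 : Pw (lam q) ρ 0 s = Pw (lam q) ρ (s + (n+1-s)) s := by
      apply Pw_congr
      intro i hi
      rw [show s + (n+1-s) + i = (0+i) + (n+1) by omega, hρper]
    rw [e1, ← Pw_add, show (n+1-s) + s = n+1 by omega]
  set Q := (n+1)/(q+1) with hQ
  have hNQ : n+1 = Q*(q+1) := by
    have h1 := Nat.mod_add_div (n+1) (q+1)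
    rw [← hQ] at h1
    have h2 : Q*(q+1) = (q+1)*Q := Nat.mul_comm _ _
    omega
  have hpow : Pw (lam q) ρ s (n+1) = (Pw (lam q) ρ s (q+1))^Q := by
    rw [hNQ]
    exact Pw_pow hdig Q
  have hblock : Pw (lam q) ρ s (q+1) = Mm (lam q) 2 * (Mm (lam q) 1)^q := by
    have e := Pw_add (lam q) ρ s 1 q
    rw [show 1 + q = q + 1 by ring] at e
    rw [e]
    have eb1 : Pw (lam q) ρ s 1 = Mm (lam q) 2 := by
      have h' : Pw (lam q) ρ s 1 = Pw (lam q) ρ s 0 * Mm (lam q) (ρ (s+0)) := rfl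
      rw [h']
      have hρs2 : ρ (s+0) = 2 := by
        rw [Nat.add_zero]
        exact (H.cyc_digits hsA).1
      rw [hρs2]
      show (1 : Matrix (Fin 2) (Fin 2) ℝ) * _ = _
      rw [one_mul]
    have eb2 : Pw (lam q) ρ (s+1) q = (Mm (lam q) 1)^q := by
      apply Pw_const
      intro i hi
      rw [show s + 1 + i = s + (1+i) by ring]
      exact ((H.cyc_digits hsA).2 (1+i) (by omega) (by omega)).1
    rw [eb1, eb2]
  have hdet : (Pw (lam q) ρ s (q+1)).det = 1 := det_Pw _ _ _ _
  have htr : Matrix.trace (Pw (lam q) ρ s (q+1)) = 2 := by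
    rw [hblock]
    exact trace_block q
  have hQ1 : 1 ≤ Q := by
    rcases Nat.eq_zero_or_pos Q with h | h
    · rw [h] at hNQ; simp at hNQ
    · exact h
  rw [comm1, hpow, show Q = (Q-1)+1 by omega]
  exact trace_pow_parabolic _ htr hdet (Q-1)

end Orb


end HCF

set_option maxHeartbeats 2000000 in
/-- if `α` has purely periodic `λ`-CF with period `r_0, …, r_n`,
`W = S^{r_0}T ⋯ S^{r_n}T` is hyperbolic, and `α'` is the Hecke conjugate of `α`
(the other root of `c x² + (d - a) x - b = 0` for `W = [[a,b],[c,d]]`), then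
`1/α'` has the purely periodic expansion with the reversed period
`r_n, r_{n-1}, …, r_0`. -/
theorem hecke_conjugate_reversed_period (p : ℕ) (hp : 3 ≤ p) (α α' : ℝ)
    (n : ℕ) (r : ℕ → ℤ)
    (hr : ∀ j : ℕ, j ≤ n → pq (heckeLambda p) α j = r j)
    (hper : cq (heckeLambda p) α (n + 1) = α)
    (hhyp : 2 < |cfWord (heckeLambda p) r n 0 0 + cfWord (heckeLambda p) r n 1 1|)
    (hroot : cfWord (heckeLambda p) r n 1 0 * α' ^ 2
        + (cfWord (heckeLambda p) r n 1 1 - cfWord (heckeLambda p) r n 0 0) * α'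
        - cfWord (heckeLambda p) r n 0 1 = 0)
    (hne : α' ≠ α) :
    (∀ j : ℕ, pq (heckeLambda p) (1 / α') j = r (n - j % (n + 1))) ∧
    cq (heckeLambda p) (1 / α') (n + 1) = 1 / α' := by
  obtain ⟨q, rfl⟩ : ∃ q, p = q + 3 := ⟨p - 3, by omega⟩
  have hlam : heckeLambda (q+3) = HCF.lam q := by
    unfold heckeLambda HCF.lam HCF.th
    push_cast
    norm_num
  rw [hlam] at hr hper hhyp hroot ⊢
  have hlpos : 0 < HCF.lam q := HCF.lam_pos q
  have hl1 : 1 ≤ HCF.lam q := HCF.lam_ge_one q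
  set ρ : ℕ → ℤ := pq (HCF.lam q) α with hρdef
  set A : ℕ → ℝ := cq (HCF.lam q) α with hAdef
  have hA0 : A 0 = α := rfl
  -- the generic one-step unfolding of `cq`
  have hstepx : ∀ (x:ℝ) (m:ℕ),
      cq (HCF.lam q) x (m+1) = 1 / ((pq (HCF.lam q) x m : ℝ) * HCF.lam q - cq (HCF.lam q) x m) := by
    intro x m
    have h : (pq (HCF.lam q) x m : ℝ) = (⌊cq (HCF.lam q) x m / HCF.lam q⌋ : ℝ) + 1 := by
      unfold pq; push_cast; ring
    rw [h]
    rfl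
  have hstep : ∀ j, A (j+1) = 1 / ((ρ j : ℝ) * HCF.lam q - A j) := fun j => hstepx α j
  have hlow : ∀ j, ((ρ j : ℝ) - 1) * HCF.lam q ≤ A j := by
    intro j
    have h1 : (⌊A j / HCF.lam q⌋ : ℝ) ≤ A j / HCF.lam q := Int.floor_le _
    have h2 : (⌊A j / HCF.lam q⌋ : ℝ) * HCF.lam q ≤ A j := by
      have := mul_le_mul_of_nonneg_right h1 hlpos.le
      rwa [div_mul_cancel₀ _ hlpos.ne'] at this
    have h3 : ((ρ j : ℝ) - 1) = (⌊A j / HCF.lam q⌋ : ℝ) := by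
      rw [hρdef]; unfold pq; push_cast; ring
    rw [h3]; exact h2
  have hhigh : ∀ j, A j < (ρ j : ℝ) * HCF.lam q := by
    intro j
    have h1 : A j / HCF.lam q < (⌊A j / HCF.lam q⌋ : ℝ) + 1 := Int.lt_floor_add_one _
    have h2 : A j < ((⌊A j / HCF.lam q⌋ : ℝ) + 1) * HCF.lam q := by
      have := mul_lt_mul_of_pos_right h1 hlpos
      rwa [div_mul_cancel₀ _ hlpos.ne'] at this
    have h3 : (ρ j : ℝ) = (⌊A j / HCF.lam q⌋ : ℝ) + 1 := by
      rw [hρdef]; unfold pq; push_cast; ring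
    rw [h3]; exact h2
  have hge' : ∀ j, 1 / HCF.lam q ≤ A (j+1) := by
    intro j
    have hd1 : 0 < (ρ j:ℝ) * HCF.lam q - A j := by have := hhigh j; linarith
    have hd2 : (ρ j:ℝ) * HCF.lam q - A j ≤ HCF.lam q := by have := hlow j; nlinarith
    rw [hstep j]
    exact one_div_le_one_div_of_le hd1 hd2
  have hge : ∀ j, 1 / HCF.lam q ≤ A j := by
    intro j
    cases j with
    | zero =>
      have h : A 0 = A (n+1) := hper.symm
      rw [h]; exact hge' n
    | succ m => exact hge' m
  have H : HCF.Orb q A ρ := ⟨hstep, hlow, hhigh, hge⟩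
  have hperA : ∀ j, A (j + (n+1)) = A j := by
    intro j
    have h0 : A (n+1) = A 0 := hper
    have h1 := H.det h0 j
    rwa [show n+1+j = j+(n+1) by ring, Nat.zero_add] at h1
  have hρper : ∀ j, ρ (j + (n+1)) = ρ j := fun j => H.rho_det (hperA j)
  have hW : cfWord (HCF.lam q) r n = HCF.Pw (HCF.lam q) ρ 0 (n+1) := by
    rw [HCF.cfWord_eq]
    apply HCF.Pw_congr
    intro i hi
    simp only [Nat.zero_add]
    exact (hr i (by omega)).symm
  rw [hW] at hhyp hroot
  set W := HCF.Pw (HCF.lam q) ρ 0 (n+1) with hWdef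
  -- α escapes the trap interval
  have hesc : HCF.vv q (H.mrun 0) < A 0 := by
    by_contra hc
    push_neg at hc
    have htr := H.deg_trace hperA hc
    rw [Matrix.trace_fin_two] at htr
    rw [htr] at hhyp
    norm_num at hhyp
  -- IVT fixed point in the trap interval
  set w := HCF.vv q (H.mrun 0) with hwdef
  have hw0 : (0:ℝ) ≤ w := (HCF.vv_pos q (H.mrun_le 0)).le
  have hmrunper : H.mrun (n+1) = H.mrun 0 := by
    apply H.mrun_congr
    intro i
    rw [Nat.zero_add, show n+1+i = i+(n+1) by ring, hρper]
  have hcont : ContinuousOn (fun x => HCF.chain (HCF.lam q) ρ (n+1) x - x) (Set.Icc 0 w) :=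
    (H.chain_contOn (n+1)).sub continuousOn_id
  have hgw : HCF.chain (HCF.lam q) ρ (n+1) w - w ≤ 0 := by
    have h := (H.chain_mem hw0 le_rfl (n+1)).1.2
    rw [hmrunper] at h
    linarith
  have hg0 : 0 ≤ HCF.chain (HCF.lam q) ρ (n+1) 0 - 0 := by
    have h := (H.chain_mem (le_refl (0:ℝ)) hw0 (n+1)).1.1
    linarith
  obtain ⟨ξ, hξmem, hξfix⟩ : ∃ ξ ∈ Set.Icc (0:ℝ) w,
      HCF.chain (HCF.lam q) ρ (n+1) ξ - ξ = 0 := by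
    have hsub := intermediate_value_Icc' hw0 hcont
    have h0mem : (0:ℝ) ∈ Set.Icc (HCF.chain (HCF.lam q) ρ (n+1) w - w)
        (HCF.chain (HCF.lam q) ρ (n+1) 0 - 0) := ⟨hgw, hg0⟩
    obtain ⟨ξ, hmem, heq⟩ := hsub h0mem
    exact ⟨ξ, hmem, heq⟩
  have hξfix' : HCF.chain (HCF.lam q) ρ (n+1) ξ = ξ := by linarith [hξfix]
  have hmem := fun j => H.chain_mem hξmem.1 hξmem.2 j
  have hξpos : 0 < ξ := by
    rw [← hξfix']
    show 0 < 1 / ((ρ n : ℝ) * HCF.lam q - HCF.chain (HCF.lam q) ρ n ξ)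
    have := (hmem n).2
    positivity
  have hξquad := HCF.chain_quad (l := HCF.lam q) (ρ := ρ) (x := ξ) (N := n+1)
    (fun j _ => (hmem j).2) hξfix'
  have hchainα : ∀ j, HCF.chain (HCF.lam q) ρ j α = A j := by
    intro j
    induction j with
    | zero => rfl
    | succ m ih =>
      show 1 / ((ρ m:ℝ) * HCF.lam q - HCF.chain (HCF.lam q) ρ m α) = A (m+1)
      rw [ih, hstep m]
  have hαquad := HCF.chain_quad (l := HCF.lam q) (ρ := ρ) (x := α) (N := n+1)
    (fun j _ => by rw [hchainα j]; exact H.den_pos j)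
    (by rw [hchainα (n+1)]; exact hper)
  rw [← hWdef] at hξquad hαquad
  have hdetW : W.det = 1 := HCF.det_Pw _ _ _ _
  have hc0 : W 1 0 ≠ 0 := by
    intro hc
    rw [hc] at hαquad hroot
    have e1 : (W 1 1 - W 0 0) * α - W 0 1 = 0 := by linarith [hαquad]
    have e2 : (W 1 1 - W 0 0) * α' - W 0 1 = 0 := by linarith [hroot]
    have e3 : (W 1 1 - W 0 0) * (α' - α) = 0 := by linarith [e1, e2]
    have e4 : W 1 1 = W 0 0 := by
      rcases mul_eq_zero.mp e3 with h | h
      · linarith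
      · exact absurd (by linarith : α' = α) hne
    have e5 : W 0 1 = 0 := by
      rw [e4] at e1
      simpa using e1
    have hdet2 : W 0 0 * W 1 1 - W 0 1 * W 1 0 = 1 := by
      rw [← Matrix.det_fin_two]; exact hdetW
    rw [e4, e5] at hdet2
    have e6 : W 0 0 = 1 ∨ W 0 0 = -1 := by
      apply mul_self_eq_one_iff.mp
      linarith
    rcases e6 with h | h <;> rw [e4, h] at hhyp <;> norm_num at hhyp
  have hξne : ξ ≠ α := by
    intro h
    rw [h] at hξmem
    rw [hA0] at hesc
    have := hξmem.2
    linarith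
  have hαq : W 1 0 * α^2 + (W 1 1 - W 0 0) * α + (-(W 0 1)) = 0 := by linarith [hαquad]
  have hα'q : W 1 0 * α'^2 + (W 1 1 - W 0 0) * α' + (-(W 0 1)) = 0 := by linarith [hroot]
  have hξq : W 1 0 * ξ^2 + (W 1 1 - W 0 0) * ξ + (-(W 0 1)) = 0 := by linarith [hξquad]
  have hξeq : ξ = α' := by
    rcases HCF.quad_roots (show α ≠ α' from fun h => hne h.symm) hc0 hαq hα'q hξq with h | h
    · exact absurd h hξne
    · exact h
  subst hξeq
  -- bounds on the conjugate orbit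
  have ha_pos : ∀ j, 0 < HCF.chain (HCF.lam q) ρ j ξ := by
    intro j
    cases j with
    | zero => exact hξpos
    | succ m =>
      show 0 < 1 / ((ρ m:ℝ) * HCF.lam q - HCF.chain (HCF.lam q) ρ m ξ)
      have := (hmem m).2
      positivity
  have ha_le : ∀ j, HCF.chain (HCF.lam q) ρ j ξ ≤ HCF.lam q := by
    intro j
    have h1 := (hmem j).1.2
    have h2 := HCF.vv_le_lam q (H.mrun_le j)
    linarith
  have hrel : ∀ j, 1 / HCF.chain (HCF.lam q) ρ (j+1) ξ
      = (ρ j : ℝ) * HCF.lam q - HCF.chain (HCF.lam q) ρ j ξ := by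
    intro j
    have h : HCF.chain (HCF.lam q) ρ (j+1) ξ
        = 1 / ((ρ j : ℝ) * HCF.lam q - HCF.chain (HCF.lam q) ρ j ξ) := rfl
    rw [h, one_div_one_div]
  -- the reversed expansion
  have key : ∀ k, k ≤ n+1 →
      cq (HCF.lam q) (1/ξ) k = 1 / HCF.chain (HCF.lam q) ρ (n+1-k) ξ := by
    intro k
    induction k with
    | zero =>
      intro _
      rw [Nat.sub_zero, hξfix']
      rfl
    | succ m ih =>
      intro hm
      have ihm := ih (by omega)
      have hj1 : n+1-m = (n-m)+1 := by omega
      have hj2 : n+1-(m+1) = n-m := by omega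
      set j := n - m with hjdef
      have hcur : cq (HCF.lam q) (1/ξ) m
          = (ρ j:ℝ) * HCF.lam q - HCF.chain (HCF.lam q) ρ j ξ := by
        rw [ihm, hj1, hrel j]
      have hdig : pq (HCF.lam q) (1/ξ) m = ρ j := by
        unfold pq
        rw [hcur]
        have h1 : 0 < HCF.chain (HCF.lam q) ρ j ξ := ha_pos j
        have h2 : HCF.chain (HCF.lam q) ρ j ξ ≤ HCF.lam q := ha_le j
        have hfl : ⌊((ρ j:ℝ) * HCF.lam q - HCF.chain (HCF.lam q) ρ j ξ) / HCF.lam q⌋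
            = ρ j - 1 := by
          rw [Int.floor_eq_iff]
          constructor
          · push_cast
            rw [le_div_iff₀ hlpos]
            nlinarith
          · push_cast
            rw [div_lt_iff₀ hlpos]
            nlinarith
        rw [hfl]
        ring
      rw [hj2, hstepx (1/ξ) m, hdig, hcur,
        show (ρ j:ℝ) * HCF.lam q - ((ρ j:ℝ) * HCF.lam q - HCF.chain (HCF.lam q) ρ j ξ)
          = HCF.chain (HCF.lam q) ρ j ξ by ring]
  have hdigit : ∀ k, k ≤ n → pq (HCF.lam q) (1/ξ) k = ρ (n-k) := by
    intro k hk
    have hcq := key k (by omega)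
    have hj1 : n+1-k = (n-k)+1 := by omega
    have hcur : cq (HCF.lam q) (1/ξ) k
        = (ρ (n-k):ℝ) * HCF.lam q - HCF.chain (HCF.lam q) ρ (n-k) ξ := by
      rw [hcq, hj1, hrel (n-k)]
    unfold pq
    rw [hcur]
    have h1 : 0 < HCF.chain (HCF.lam q) ρ (n-k) ξ := ha_pos (n-k)
    have h2 : HCF.chain (HCF.lam q) ρ (n-k) ξ ≤ HCF.lam q := ha_le (n-k)
    have hfl : ⌊((ρ (n-k):ℝ) * HCF.lam q - HCF.chain (HCF.lam q) ρ (n-k) ξ) / HCF.lam q⌋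
        = ρ (n-k) - 1 := by
      rw [Int.floor_eq_iff]
      constructor
      · push_cast
        rw [le_div_iff₀ hlpos]
        nlinarith
      · push_cast
        rw [div_lt_iff₀ hlpos]
        nlinarith
    rw [hfl]
    ring
  have hconc2 : cq (HCF.lam q) (1/ξ) (n+1) = 1/ξ := by
    have h := key (n+1) le_rfl
    rwa [Nat.sub_self] at h
  have hperβ : ∀ i, cq (HCF.lam q) (1/ξ) (i + (n+1)) = cq (HCF.lam q) (1/ξ) i := by
    intro i
    induction i with
    | zero =>
      rw [Nat.zero_add]
      exact hconc2
    | succ m ih =>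
      rw [show m+1+(n+1) = (m+(n+1))+1 by ring, hstepx, hstepx]
      unfold pq
      rw [ih]
  have hpqper : ∀ i, pq (HCF.lam q) (1/ξ) (i+(n+1)) = pq (HCF.lam q) (1/ξ) i := by
    intro i
    unfold pq
    rw [hperβ]
  have hmultper : ∀ c t, pq (HCF.lam q) (1/ξ) (t + c*(n+1)) = pq (HCF.lam q) (1/ξ) t := by
    intro c
    induction c with
    | zero => intro t; norm_num
    | succ m ih =>
      intro t
      rw [show t + (m+1)*(n+1) = (t + m*(n+1)) + (n+1) by ring, hpqper, ih]
  constructor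
  · intro j
    have hmod : j % (n+1) ≤ n := by
      have := Nat.mod_lt j (y := n+1) (by omega)
      omega
    calc pq (HCF.lam q) (1/ξ) j
        = pq (HCF.lam q) (1/ξ) (j % (n+1) + (j/(n+1))*(n+1)) := by
          rw [mul_comm, Nat.mod_add_div]
      _ = pq (HCF.lam q) (1/ξ) (j % (n+1)) := hmultper _ _
      _ = ρ (n - j % (n+1)) := hdigit _ hmod
      _ = r (n - j % (n+1)) := hr _ (by omega)
  · exact hconc2
end
end
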